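/- arXiv:2207.06404 — 4 statements merged into one kernel-verified Lean document; each statement's English description precedes it below -/
import Mathlib

section
/- Let α ∈ (0,1) be irrational. Then α is badly approximable (there exists C > 0 with |α − p/q| ≥ C/q² for every p ∈ ℤ and every integer q ≥ 1) if and only if its continued fraction entries are uniformly bounded: there exists M ∈ ℕ such that a_n(α) ≤ M for all n ≥ 1. -/
/-- The Gauss map `G(x) = {1/x}` (with `G(0) = 0`). -/
noncomputable def gaussMap (x : ℝ) : ℝ := if x = 0 then 0 else Int.fract (1 / x)

/-- The continued fraction entries of `α`: `a_n(α) = ⌊1 / G^[n-1](α)⌋` for `n ≥ 1`. -/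
noncomputable def cfA (α : ℝ) (n : ℕ) : ℤ := ⌊1 / gaussMap^[n - 1] α⌋

namespace BddCF

/-- `n`-th Gauss iterate. -/
noncomputable def gx (α : ℝ) (n : ℕ) : ℝ := gaussMap^[n] α

/-- zero-indexed partial quotients: `ca α n = a_{n+1}(α)`. -/
noncomputable def ca (α : ℝ) (n : ℕ) : ℤ := ⌊1 / gx α n⌋

/-- convergent data: `cv α n = ((p_{n-1}, q_{n-1}), (p_n, q_n))`. -/
noncomputable def cv (α : ℝ) : ℕ → (ℤ × ℤ) × (ℤ × ℤ)
  | 0 => ((1, 0), (0, 1))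
  | n + 1 =>
    ((cv α n).2,
      (ca α n * (cv α n).2.1 + (cv α n).1.1, ca α n * (cv α n).2.2 + (cv α n).1.2))

noncomputable def P (α : ℝ) (n : ℕ) : ℤ := (cv α n).2.1
noncomputable def Q (α : ℝ) (n : ℕ) : ℤ := (cv α n).2.2
noncomputable def Pp (α : ℝ) (n : ℕ) : ℤ := (cv α n).1.1
noncomputable def Qp (α : ℝ) (n : ℕ) : ℤ := (cv α n).1.2

variable {α : ℝ}

lemma P_zero : P α 0 = 0 := rfl
lemma Q_zero : Q α 0 = 1 := rfl
lemma Pp_zero : Pp α 0 = 1 := rfl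
lemma Qp_zero : Qp α 0 = 0 := rfl
lemma P_succ (n : ℕ) : P α (n + 1) = ca α n * P α n + Pp α n := rfl
lemma Q_succ (n : ℕ) : Q α (n + 1) = ca α n * Q α n + Qp α n := rfl
lemma Pp_succ (n : ℕ) : Pp α (n + 1) = P α n := rfl
lemma Qp_succ (n : ℕ) : Qp α (n + 1) = Q α n := rfl

lemma gx_mem (hα : α ∈ Set.Ioo (0:ℝ) 1) (hirr : Irrational α) (n : ℕ) :
    gx α n ∈ Set.Ioo (0:ℝ) 1 ∧ Irrational (gx α n) := by
  induction n with
  | zero => exact ⟨hα, hirr⟩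
  | succ n ih =>
    obtain ⟨⟨h0, h1⟩, hir⟩ := ih
    have hne : gx α n ≠ 0 := ne_of_gt h0
    have hgx : gx α (n + 1) = Int.fract (1 / gx α n) := by
      rw [gx, Function.iterate_succ_apply', ← gx, gaussMap, if_neg hne]
    have hinv : Irrational (1 / gx α n) := by
      simpa [one_div] using hir.inv
    have hfr : Irrational (Int.fract (1 / gx α n)) := by
      have : Int.fract (1 / gx α n) = 1 / gx α n - (⌊1 / gx α n⌋ : ℝ) := rfl
      rw [this]
      exact hinv.sub_intCast _
    refine ⟨⟨?_, ?_⟩, ?_⟩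
    · rw [hgx]
      exact lt_of_le_of_ne (Int.fract_nonneg _) (Ne.symm (by simpa using hfr.ne_int 0))
    · rw [hgx]; exact Int.fract_lt_one _
    · rw [hgx]; exact hfr

lemma gx_pos (hα : α ∈ Set.Ioo (0:ℝ) 1) (hirr : Irrational α) (n : ℕ) :
    0 < gx α n := (gx_mem hα hirr n).1.1

lemma gx_lt_one (hα : α ∈ Set.Ioo (0:ℝ) 1) (hirr : Irrational α) (n : ℕ) :
    gx α n < 1 := (gx_mem hα hirr n).1.2

lemma one_le_ca (hα : α ∈ Set.Ioo (0:ℝ) 1) (hirr : Irrational α) (n : ℕ) :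
    1 ≤ ca α n := by
  have h0 := gx_pos hα hirr n
  have h1 := gx_lt_one hα hirr n
  rw [ca, Int.le_floor]
  push_cast
  rw [le_div_iff₀ h0]
  linarith

/-- key recursion: `x_n * (a_n + x_{n+1}) = 1`. -/
lemma gx_rec (hα : α ∈ Set.Ioo (0:ℝ) 1) (hirr : Irrational α) (n : ℕ) :
    gx α n * ((ca α n : ℝ) + gx α (n + 1)) = 1 := by
  have h0 := gx_pos hα hirr n
  have hgx : gx α (n + 1) = 1 / gx α n - (ca α n : ℝ) := by
    rw [gx, Function.iterate_succ_apply', ← gx, gaussMap, if_neg (ne_of_gt h0), Int.fract, ca]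
  rw [hgx]
  field_simp
  ring

lemma q_bounds (hα : α ∈ Set.Ioo (0:ℝ) 1) (hirr : Irrational α) (n : ℕ) :
    0 ≤ Qp α n ∧ 1 ≤ Q α n ∧ Qp α n ≤ Q α n := by
  induction n with
  | zero => simp [Q_zero, Qp_zero]
  | succ n ih =>
    obtain ⟨h0, h1, h2⟩ := ih
    have ha := one_le_ca hα hirr n
    have : Q α n ≤ ca α n * Q α n := le_mul_of_one_le_left (by linarith) ha
    refine ⟨?_, ?_, ?_⟩
    · rw [Qp_succ]; linarith
    · rw [Q_succ]; linarith
    · rw [Qp_succ, Q_succ]; linarith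

lemma det (hα : α ∈ Set.Ioo (0:ℝ) 1) (hirr : Irrational α) (n : ℕ) :
    Pp α n * Q α n - P α n * Qp α n = (-1) ^ n := by
  induction n with
  | zero => simp [P_zero, Q_zero, Pp_zero, Qp_zero]
  | succ n ih =>
    rw [P_succ, Q_succ, Pp_succ, Qp_succ, pow_succ]
    ring_nf
    ring_nf at ih
    linarith [ih]

/-- the fundamental identity `α (q_n + q_{n-1} x_n) = p_n + p_{n-1} x_n`. -/
lemma main_id (hα : α ∈ Set.Ioo (0:ℝ) 1) (hirr : Irrational α) (n : ℕ) :
    α * ((Q α n : ℝ) + (Qp α n : ℝ) * gx α n)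
      = (P α n : ℝ) + (Pp α n : ℝ) * gx α n := by
  induction n with
  | zero => simp [P_zero, Q_zero, Pp_zero, Qp_zero, gx]
  | succ n ih =>
    have hrec := gx_rec hα hirr n
    rw [P_succ, Q_succ, Pp_succ, Qp_succ]
    push_cast
    linear_combination ((ca α n : ℝ) + gx α (n + 1)) * ih
      - (α * (Qp α n : ℝ) - (Pp α n : ℝ)) * hrec

lemma denom_pos (hα : α ∈ Set.Ioo (0:ℝ) 1) (hirr : Irrational α) (n : ℕ) :
    0 < (Q α n : ℝ) + (Qp α n : ℝ) * gx α n := by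
  obtain ⟨h0, h1, h2⟩ := q_bounds hα hirr n
  have := gx_pos hα hirr n
  have h0' : (0:ℝ) ≤ Qp α n := by exact_mod_cast h0
  have h1' : (1:ℝ) ≤ Q α n := by exact_mod_cast h1
  nlinarith

/-- distance formula. -/
lemma dist_eq (hα : α ∈ Set.Ioo (0:ℝ) 1) (hirr : Irrational α) (n : ℕ) :
    |α - (P α n : ℝ) / (Q α n : ℝ)|
      = gx α n / ((Q α n : ℝ) * ((Q α n : ℝ) + (Qp α n : ℝ) * gx α n)) := by
  obtain ⟨h0, h1, h2⟩ := q_bounds hα hirr n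
  have hq : (0:ℝ) < Q α n := by exact_mod_cast h1
  have hd := denom_pos hα hirr n
  have hx := gx_pos hα hirr n
  have hid := main_id hα hirr n
  have hdet := det hα hirr n
  have hdet' : ((Pp α n : ℝ) * Q α n - (P α n : ℝ) * Qp α n) = (-1 : ℝ) ^ n := by
    exact_mod_cast congrArg (fun z : ℤ => (z : ℝ)) hdet
  have key : α - (P α n : ℝ) / (Q α n : ℝ)
      = (-1:ℝ) ^ n * gx α n / ((Q α n : ℝ) * ((Q α n : ℝ) + (Qp α n : ℝ) * gx α n)) := by
    rw [eq_div_iff (by positivity)]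
    have expand : (α - (P α n : ℝ) / (Q α n : ℝ))
        * ((Q α n : ℝ) * ((Q α n : ℝ) + (Qp α n : ℝ) * gx α n))
        = (α * ((Q α n : ℝ) + (Qp α n : ℝ) * gx α n)) * (Q α n : ℝ)
          - (P α n : ℝ) * ((Q α n : ℝ) + (Qp α n : ℝ) * gx α n) := by
      field_simp
    rw [expand, hid]
    linear_combination gx α n * hdet'
  rw [key, abs_div, abs_mul, abs_pow, abs_neg, abs_one, one_pow, one_mul,
    abs_of_pos hx, abs_of_pos (by positivity : (0:ℝ) < (Q α n : ℝ) * ((Q α n : ℝ) + (Qp α n : ℝ) * gx α n))]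

/-- upper bound `|α - p_n/q_n| < 1/(q_n q_{n+1})`. -/
lemma dist_lt (hα : α ∈ Set.Ioo (0:ℝ) 1) (hirr : Irrational α) (n : ℕ) :
    |α - (P α n : ℝ) / (Q α n : ℝ)| < 1 / ((Q α n : ℝ) * (Q α (n + 1) : ℝ)) := by
  obtain ⟨h0, h1, h2⟩ := q_bounds hα hirr n
  have hq : (0:ℝ) < Q α n := by exact_mod_cast h1
  have hq0 : (0:ℝ) ≤ Qp α n := by exact_mod_cast h0
  have hd := denom_pos hα hirr n
  have hx := gx_pos hα hirr n
  have hx1 := gx_pos hα hirr (n + 1)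
  have hrec := gx_rec hα hirr n
  have hq1 : (0:ℝ) < Q α (n + 1) := by
    exact_mod_cast (q_bounds hα hirr (n + 1)).2.1
  rw [dist_eq hα hirr n, div_lt_div_iff₀ (by positivity) (by positivity)]
  have hQs : (Q α (n+1) : ℝ) = (ca α n : ℝ) * Q α n + Qp α n := by
    rw [Q_succ]; push_cast; ring
  rw [hQs]
  have hca : gx α n * (ca α n : ℝ) < 1 := by nlinarith [mul_pos hx hx1, hrec]
  nlinarith [mul_pos hq hq, mul_nonneg (le_of_lt hx) (mul_nonneg hq0 (le_of_lt hq))]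

/-- lower bound `|α - p_n/q_n| > 1/(q_n (q_{n+1} + q_n))`. -/
lemma dist_gt (hα : α ∈ Set.Ioo (0:ℝ) 1) (hirr : Irrational α) (n : ℕ) :
    1 / ((Q α n : ℝ) * ((Q α (n + 1) : ℝ) + (Q α n : ℝ)))
      < |α - (P α n : ℝ) / (Q α n : ℝ)| := by
  obtain ⟨h0, h1, h2⟩ := q_bounds hα hirr n
  have hq : (0:ℝ) < Q α n := by exact_mod_cast h1
  have hq0 : (0:ℝ) ≤ Qp α n := by exact_mod_cast h0
  have hq2 : (Qp α n : ℝ) ≤ Q α n := by exact_mod_cast h2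
  have hd := denom_pos hα hirr n
  have hx := gx_pos hα hirr n
  have hx2 := gx_lt_one hα hirr (n + 1)
  have hx1 := gx_pos hα hirr (n + 1)
  have hrec := gx_rec hα hirr n
  have hq1 : (0:ℝ) < Q α (n + 1) := by
    exact_mod_cast (q_bounds hα hirr (n + 1)).2.1
  rw [dist_eq hα hirr n, div_lt_div_iff₀ (by positivity) (by positivity)]
  have hQs : (Q α (n+1) : ℝ) = (ca α n : ℝ) * Q α n + Qp α n := by
    rw [Q_succ]; push_cast; ring
  rw [hQs]
  have hca : 1 < gx α n * ((ca α n : ℝ) + 1) := by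
    nlinarith [mul_pos hx (sub_pos.mpr hx2), hrec]
  nlinarith [mul_pos hq hq, mul_nonneg (le_of_lt hx) (mul_nonneg hq0 (le_of_lt hq))]

lemma q_mono (hα : α ∈ Set.Ioo (0:ℝ) 1) (hirr : Irrational α) (n : ℕ) :
    Q α n ≤ Q α (n + 1) := by
  obtain ⟨h0, h1, h2⟩ := q_bounds hα hirr n
  have ha := one_le_ca hα hirr n
  rw [Q_succ]
  nlinarith

lemma q_growth (hα : α ∈ Set.Ioo (0:ℝ) 1) (hirr : Irrational α) (n : ℕ) :
    (n : ℤ) ≤ Q α n := by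
  induction n with
  | zero => simp [Q_zero]
  | succ n ih =>
    obtain ⟨h0, h1, h2⟩ := q_bounds hα hirr n
    have ha := one_le_ca hα hirr n
    rcases Nat.eq_zero_or_pos n with h | h
    · subst h
      simpa [Q_succ, Q_zero, Qp_zero] using ha
    · have hq : 1 ≤ Qp α (n) := by
        obtain ⟨m, rfl⟩ := Nat.exists_eq_add_of_le h
        rw [show 1 + m = m + 1 by ring, Qp_succ]
        exact (q_bounds hα hirr m).2.1
      rw [Q_succ]
      push_cast
      nlinarith

end BddCF

open BddCF in
/-- an irrational `α ∈ (0,1)` is badly approximable iff its continued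
fraction entries are uniformly bounded. -/
theorem badly_approximable_iff_bounded_cf
    (α : ℝ) (hα : α ∈ Set.Ioo (0:ℝ) 1) (hirr : Irrational α) :
    (∃ C > (0:ℝ), ∀ p : ℤ, ∀ q : ℤ, 1 ≤ q →
        C / (q : ℝ) ^ 2 ≤ |α - (p : ℝ) / (q : ℝ)|) ↔
    (∃ M : ℕ, ∀ n : ℕ, 1 ≤ n → cfA α n ≤ (M : ℤ)) := by
  have hcf : ∀ n : ℕ, cfA α (n + 1) = ca α n := fun n => rfl
  constructor
  · rintro ⟨C, hC, hbad⟩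
    refine ⟨⌈1 / C⌉₊, fun n hn => ?_⟩
    obtain ⟨m, rfl⟩ : ∃ m, n = m + 1 := ⟨n - 1, (Nat.succ_pred_eq_of_pos hn).symm⟩
    rw [hcf]
    -- show `ca α m ≤ ⌈1/C⌉₊` via `C/q_m² ≤ |α - p_m/q_m| < 1/(q_m q_{m+1}) ≤ 1/(a q_m²)`
    obtain ⟨h0, h1, h2⟩ := q_bounds hα hirr m
    have hq : (0:ℝ) < Q α m := by exact_mod_cast h1
    have hq0 : (0:ℝ) ≤ Qp α m := by exact_mod_cast h0
    have ha : 1 ≤ ca α m := one_le_ca hα hirr m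
    have ha' : (0:ℝ) < (ca α m : ℝ) := by exact_mod_cast lt_of_lt_of_le one_pos ha
    have hb := hbad (P α m) (Q α m) h1
    have hub := dist_lt hα hirr m
    have hQs : (Q α (m+1) : ℝ) = (ca α m : ℝ) * Q α m + Qp α m := by
      rw [Q_succ]; push_cast; ring
    have hle : (ca α m : ℝ) * Q α m ≤ Q α (m + 1) := by rw [hQs]; linarith
    have hq1 : (0:ℝ) < Q α (m + 1) := by
      exact_mod_cast (q_bounds hα hirr (m + 1)).2.1
    have key : C / (Q α m : ℝ) ^ 2 < 1 / ((Q α m : ℝ) * ((ca α m : ℝ) * Q α m)) := by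
      calc C / (Q α m : ℝ) ^ 2 ≤ |α - (P α m : ℝ) / (Q α m : ℝ)| := hb
        _ < 1 / ((Q α m : ℝ) * (Q α (m + 1) : ℝ)) := hub
        _ ≤ 1 / ((Q α m : ℝ) * ((ca α m : ℝ) * Q α m)) := by
            apply one_div_le_one_div_of_le (by positivity)
            nlinarith
    have hca : (ca α m : ℝ) < 1 / C := by
      rw [div_lt_div_iff₀ (by positivity) (by positivity)] at key
      rw [lt_div_iff₀ hC]
      nlinarith
    have : (ca α m : ℝ) ≤ (⌈1 / C⌉₊ : ℝ) := le_trans (le_of_lt hca) (Nat.le_ceil _)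
    exact_mod_cast this
  · rintro ⟨M, hM⟩
    have haM : ∀ n, ca α n ≤ M := fun n => by simpa [hcf] using hM (n + 1) (Nat.le_add_left 1 n)
    have hM1 : 1 ≤ (M : ℤ) := le_trans (one_le_ca hα hirr 0) (haM 0)
    refine ⟨1 / ((M : ℝ) + 1) ^ 3, by positivity, fun p q hq => ?_⟩
    show 1 / ((M : ℝ) + 1) ^ 3 / (q:ℝ) ^ 2 ≤ |α - (p : ℝ) / (q : ℝ)|
    have hqR : (1:ℝ) ≤ (q : ℝ) := by exact_mod_cast hq
    have hqpos : (0:ℝ) < q := by linarith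
    -- find n minimal with q < Q α (n+1)
    have hex : ∃ n, q < Q α (n + 1) := by
      refine ⟨q.toNat, ?_⟩
      have h := q_growth hα hirr (q.toNat + 1)
      have : (q.toNat : ℤ) + 1 ≤ Q α (q.toNat + 1) := by push_cast at h ⊢; linarith
      omega
    classical
    set n := Nat.find hex with hn_def
    have hn : q < Q α (n + 1) := Nat.find_spec hex
    have hQn : Q α n ≤ q := by
      rcases Nat.eq_zero_or_pos n with h | h
      · rw [h, Q_zero]; exact hq
      · have hfm := Nat.find_min hex (show n - 1 < Nat.find hex by omega)
        have h2 : n - 1 + 1 = n := Nat.succ_pred_eq_of_pos h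
        rw [h2] at hfm
        omega
    clear_value n
    -- `p * Q_{n+1} ≠ P_{n+1} * q` since `q < Q_{n+1}` and the convergent is in lowest terms
    have hdetn : P α n * Q α (n + 1) - P α (n + 1) * Q α n = (-1 : ℤ) ^ (n + 1) := by
      have := det hα hirr (n + 1)
      rwa [Pp_succ, Qp_succ] at this
    have hne : p * Q α (n + 1) ≠ P α (n + 1) * q := by
      intro heq
      have hd : Q α (n + 1) ∣ q * (-1 : ℤ) ^ (n + 1) :=
        ⟨q * P α n - p * Q α n, by linear_combination (-q) * hdetn + Q α n * heq⟩
      have h2 : ((-1 : ℤ) ^ (n + 1)) * ((-1 : ℤ) ^ (n + 1)) = 1 := by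
        rw [← pow_add, ← two_mul, pow_mul]; norm_num
      have hdq : Q α (n + 1) ∣ q := by
        have := hd.mul_right ((-1 : ℤ) ^ (n + 1))
        rwa [mul_assoc, h2, mul_one] at this
      have := Int.le_of_dvd (by omega) hdq
      omega
    -- numerical setup
    set a : ℝ := (q : ℝ) with ha_def
    set B : ℝ := (Q α n : ℝ) with hB_def
    set B1 : ℝ := (Q α (n + 1) : ℝ) with hB1_def
    set B2 : ℝ := (Q α (n + 2) : ℝ) with hB2_def
    set K : ℝ := (M : ℝ) + 1 with hK_def
    clear_value a B B1 B2 K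
    have hB_1 : (1:ℝ) ≤ B := by rw [hB_def]; exact_mod_cast (q_bounds hα hirr n).2.1
    have hB1_1 : (1:ℝ) ≤ B1 := by rw [hB1_def]; exact_mod_cast (q_bounds hα hirr (n + 1)).2.1
    have hB2_1 : (1:ℝ) ≤ B2 := by rw [hB2_def]; exact_mod_cast (q_bounds hα hirr (n + 2)).2.1
    have hBa : B ≤ a := by rw [hB_def, ha_def]; exact_mod_cast hQn
    have haB1 : a < B1 := by rw [ha_def, hB1_def]; exact_mod_cast hn
    have hK2 : (2:ℝ) ≤ K := by
      have : (1:ℝ) ≤ (M:ℝ) := by exact_mod_cast hM1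
      rw [hK_def]; linarith
    have hstep : ∀ m : ℕ, (Q α (m + 1) : ℝ) ≤ ((M : ℝ) + 1) * (Q α m : ℝ) := by
      intro m
      obtain ⟨h0, h1, h2⟩ := q_bounds hα hirr m
      have haM' := haM m
      have h1le := one_le_ca hα hirr m
      have : (Q α (m + 1) : ℤ) ≤ (M + 1) * Q α m := by rw [Q_succ]; nlinarith
      exact_mod_cast this
    have hB1KB : B1 ≤ K * B := by rw [hB1_def, hK_def, hB_def]; exact hstep n
    have hB2KB1 : B2 ≤ K * B1 := by rw [hB2_def, hK_def, hB1_def]; exact hstep (n + 1)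
    have hB2sum : B1 + B ≤ B2 := by
      rw [hB1_def, hB_def, hB2_def]
      have : Q α (n + 1) + Q α n ≤ Q α (n + 2) := by
        have := q_bounds hα hirr (n + 1)
        have h1le := one_le_ca hα hirr (n + 1)
        rw [Q_succ (n + 1), Qp_succ]
        nlinarith [this.2.1]
      exact_mod_cast this
    have hapos : (0:ℝ) < a := hqpos
    have hBpos : (0:ℝ) < B := by linarith
    have hB1pos : (0:ℝ) < B1 := by linarith
    have hB2pos : (0:ℝ) < B2 := by linarith
    have hKpos : (0:ℝ) < K := by linarith
    -- |p/q - P_{n+1}/Q_{n+1}| ≥ 1/(a * B1)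
    have hnum : (1:ℝ) ≤ |(p * Q α (n + 1) - P α (n + 1) * q : ℤ)| := by
      exact_mod_cast Int.one_le_abs (sub_ne_zero.mpr hne)
    have hfrac : (p : ℝ) / a - (P α (n + 1) : ℝ) / B1
        = ((p * Q α (n + 1) - P α (n + 1) * q : ℤ) : ℝ) / (a * B1) := by
      have h1 : (q : ℝ) ≠ 0 := by positivity
      have h2 : ((Q α (n + 1) : ℤ) : ℝ) ≠ 0 := by
        rw [← hB1_def]; exact ne_of_gt hB1pos
      rw [hB1_def, ha_def, div_sub_div _ _ h1 h2]
      push_cast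
      ring
    have hsep : 1 / (a * B1) ≤ |(p : ℝ) / a - (P α (n + 1) : ℝ) / B1| := by
      rw [hfrac, abs_div, abs_of_pos (by positivity : (0:ℝ) < a * B1)]
      apply div_le_div_of_nonneg_right _ (by positivity)
      · push_cast at hnum ⊢
        exact hnum
    -- |α - P_{n+1}/Q_{n+1}| < 1/(B1 * B2)
    have hconv : |α - (P α (n + 1) : ℝ) / B1| < 1 / (B1 * B2) := by
      have h := dist_lt hα hirr (n + 1)
      rw [show n + 1 + 1 = n + 2 from rfl, ← hB1_def, ← hB2_def] at h
      exact h
    -- triangle inequality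
    have htri : 1 / (a * B1) - 1 / (B1 * B2) ≤ |α - (p : ℝ) / a| := by
      have h3 : |(p : ℝ) / a - (P α (n + 1) : ℝ) / B1|
          ≤ |(p : ℝ) / a - α| + |α - (P α (n + 1) : ℝ) / B1| := by
        calc |(p : ℝ) / a - (P α (n + 1) : ℝ) / B1|
            = |((p : ℝ) / a - α) + (α - (P α (n + 1) : ℝ) / B1)| := by ring_nf
          _ ≤ _ := abs_add_le _ _
      have h4 : |(p : ℝ) / a - α| = |α - (p : ℝ) / a| := abs_sub_comm _ _
      linarith [hsep, hconv, h3, h4.le, h4.ge]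
    -- final chain
    have hfinal : 1 / K ^ 3 / a ^ 2 ≤ 1 / (a * B1) - 1 / (B1 * B2) := by
      have heq2 : 1 / (a * B1) - 1 / (B1 * B2) = (B2 - a) / (a * B1 * B2) := by
        field_simp
      rw [heq2, div_div, div_le_div_iff₀ (by positivity) (by positivity)]
      have hKa : B1 ≤ K * a := le_trans hB1KB (mul_le_mul_of_nonneg_left hBa hKpos.le)
      have h1 : (0:ℝ) ≤ (K * B1 - B2) * (a * B1) :=
        mul_nonneg (by linarith) (by positivity)
      have h2 : (0:ℝ) ≤ (K * B - B1) * (K * a * B1) :=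
        mul_nonneg (by linarith) (by positivity)
      have h3 : (0:ℝ) ≤ (K * a - B1) * (K ^ 2 * a * B) :=
        mul_nonneg (by linarith) (by positivity)
      have h4 : (0:ℝ) ≤ (B2 - a - B) * (K ^ 3 * a ^ 2) :=
        mul_nonneg (by linarith) (by positivity)
      nlinarith [h1, h2, h3, h4]
    exact le_trans hfinal htri
end

section
/- (Uniform sub-polynomial Birkhoff sum bounds for bounded-type rotations) Let M ∈ ℕ and let α ∈ (0,1) be irrational with continued fraction entries a_n(α) ≤ M for all n ≥ 1. Then there exist C > 0 and γ ∈ (0,1), depending only on M, such that for every 1-periodic function f : ℝ → ℝ of bounded variation on [0,1] with ∫₀¹ f(x) dx = 0, every x ∈ ℝ and every n ≥ 1, |∑_{k=0}^{n−1} f(x + kα)| ≤ C · Var_{[0,1]}(f) · n^γ, where Var_{[0,1]}(f) denotes the total variation of f on [0,1]. -/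
namespace BirkhoffAux

open Set

noncomputable def xs (α : ℝ) (n : ℕ) : ℝ := gaussMap^[n] α

noncomputable def aa (α : ℝ) (n : ℕ) : ℤ := ⌊1 / xs α n⌋

noncomputable def pp (α : ℝ) : ℕ → ℤ
  | 0 => 0
  | 1 => 1
  | n+2 => aa α (n+1) * pp α (n+1) + pp α n

noncomputable def qq (α : ℝ) : ℕ → ℕ
  | 0 => 1
  | 1 => (aa α 0).toNat
  | n+2 => (aa α (n+1)).toNat * qq α (n+1) + qq α n

variable {α : ℝ} (hα : α ∈ Set.Ioo (0:ℝ) 1) (hirr : Irrational α)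

include hα hirr in
lemma xs_mem : ∀ n, xs α n ∈ Set.Ioo (0:ℝ) 1 ∧ Irrational (xs α n) := by
  intro n
  induction n with
  | zero => exact ⟨hα, hirr⟩
  | succ n ih =>
    obtain ⟨⟨h0, h1⟩, hi⟩ := ih
    have hne : xs α n ≠ 0 := ne_of_gt h0
    have hys : xs α (n+1) = Int.fract (1 / xs α n) := by
      rw [xs, Function.iterate_succ_apply', ← xs, gaussMap, if_neg hne]
    have hinv : Irrational (1 / xs α n) := by
      rw [one_div]
      exact hi.inv
    have hfr : Irrational (Int.fract (1 / xs α n)) := by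
      rw [Int.fract]
      exact Irrational.sub_intCast hinv _
    constructor
    · rw [hys]
      refine ⟨?_, Int.fract_lt_one _⟩
      rcases lt_or_eq_of_le (Int.fract_nonneg (1 / xs α n)) with h | h
      · exact h
      · exact absurd (hfr) (by rw [← h]; exact not_irrational_zero)
    · rw [hys]; exact hfr

include hα hirr in
lemma xs_pos (n : ℕ) : 0 < xs α n := (xs_mem hα hirr n).1.1

include hα hirr in
lemma xs_lt_one (n : ℕ) : xs α n < 1 := (xs_mem hα hirr n).1.2

include hα hirr in
lemma aa_one_le (n : ℕ) : 1 ≤ aa α n := by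
  have h0 := xs_pos hα hirr n
  have h1 := xs_lt_one hα hirr n
  rw [aa, Int.le_floor]
  push_cast
  rw [le_div_iff₀ h0]
  linarith

include hα hirr in
lemma xs_rec (n : ℕ) : xs α n * xs α (n+1) = 1 - aa α n * xs α n := by
  have h0 := xs_pos hα hirr n
  have hys : xs α (n+1) = Int.fract (1 / xs α n) := by
    rw [xs, Function.iterate_succ_apply', ← xs, gaussMap, if_neg (ne_of_gt h0)]
  rw [hys, Int.fract, ← aa]
  field_simp

/-- cfA in terms of aa -/
lemma cfA_eq (n : ℕ) : cfA α (n+1) = aa α n := by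
  simp [cfA, aa, xs]

include hα hirr in
lemma qq_toNat (n : ℕ) : ((aa α n).toNat : ℤ) = aa α n :=
  Int.toNat_of_nonneg (le_trans zero_le_one (aa_one_le hα hirr n))

include hα hirr in
lemma qq_one_le : ∀ n, 1 ≤ qq α n ∧ qq α n ≤ qq α (n+1) := by
  intro n
  induction n with
  | zero =>
    refine ⟨le_refl _, ?_⟩
    have := aa_one_le hα hirr 0
    simp only [qq]
    omega
  | succ n ih =>
    have ha := aa_one_le hα hirr (n+1)
    have h1 : 1 ≤ (aa α (n+1)).toNat := by omega
    constructor
    · omega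
    · show qq α (n+1) ≤ (aa α (n+1)).toNat * qq α (n+1) + qq α n
      nlinarith [ih.1, ih.2]

include hα hirr in
lemma qq_pos (n : ℕ) : 0 < qq α n := (qq_one_le hα hirr n).1

include hα hirr in
lemma qq_mono {m n : ℕ} (h : m ≤ n) : qq α m ≤ qq α n := by
  induction n with
  | zero => simpa [Nat.le_zero.mp h]
  | succ n ih =>
    rcases Nat.lt_or_ge m (n+1) with h' | h'
    · exact le_trans (ih (by omega)) (qq_one_le hα hirr n).2
    · have : m = n+1 := by omega
      simp [this]

include hα hirr in
lemma qq_ge (n : ℕ) : n ≤ qq α n := by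
  induction n with
  | zero => simp
  | succ n ih =>
    match n, ih with
    | 0, _ => exact (qq_one_le hα hirr 1).1
    | Nat.succ m, ih =>
      have h1 : qq α (m+1) + qq α m ≤ qq α (m+2) := by
        have ha := aa_one_le hα hirr (m+1)
        have h1 : 1 ≤ (aa α (m+1)).toNat := by omega
        show _ ≤ (aa α (m+1)).toNat * qq α (m+1) + qq α m
        nlinarith
      have h2 := qq_pos hα hirr m
      have ih' : m + 1 ≤ qq α (m+1) := ih
      show m + 2 ≤ qq α (m+2)
      omega

/-- The product of the first n+1 Gauss iterates. -/
noncomputable def PP (α : ℝ) (n : ℕ) : ℝ := ∏ i ∈ Finset.range (n+1), xs α i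

include hα hirr in
lemma PP_pos (n : ℕ) : 0 < PP α n :=
  Finset.prod_pos fun i _ => xs_pos hα hirr i

lemma PP_succ (n : ℕ) : PP α (n+1) = PP α n * xs α (n+1) := by
  rw [PP, PP, Finset.prod_range_succ]

include hα hirr in
lemma Bval : ∀ n, (qq α n : ℝ) * α - pp α n = (-1)^n * PP α n := by
  have castq : ∀ n, ((aa α n).toNat : ℝ) = (aa α n : ℝ) := by
    intro n
    exact_mod_cast congrArg Int.cast (qq_toNat hα hirr n)
  have key : ∀ n, ((qq α n : ℝ) * α - pp α n = (-1)^n * PP α n) ∧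
      ((qq α (n+1) : ℝ) * α - pp α (n+1) = (-1)^(n+1) * PP α (n+1)) := by
    intro n
    induction n with
    | zero =>
      have hx0 : xs α 0 = α := rfl
      have hPP0 : PP α 0 = α := by simp [PP, xs]
      constructor
      · simp [qq, pp, hPP0]
      · have h := xs_rec hα hirr 0
        rw [hx0] at h
        show ((aa α 0).toNat : ℝ) * α - ((1:ℤ) : ℝ) = (-1)^(0+1) * PP α (0+1)
        rw [castq 0, PP_succ, hPP0]
        push_cast
        linear_combination h
    | succ n ih =>
      obtain ⟨ih1, ih2⟩ := ih
      refine ⟨ih2, ?_⟩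
      have h2 : xs α (n+1) * xs α (n+2) = 1 - aa α (n+1) * xs α (n+1) := xs_rec hα hirr (n+1)
      have hq : (qq α (n+2) : ℝ) = (aa α (n+1) : ℝ) * qq α (n+1) + qq α n := by
        show ((((aa α (n+1)).toNat) * qq α (n+1) + qq α n : ℕ) : ℝ) = _
        push_cast [castq (n+1)]
        ring
      have hp : (pp α (n+2) : ℝ) = (aa α (n+1) : ℝ) * pp α (n+1) + pp α n := by
        show ((aa α (n+1) * pp α (n+1) + pp α n : ℤ) : ℝ) = _
        push_cast; ring
      show (qq α (n+2) : ℝ) * α - pp α (n+2) = (-1)^(n+2) * PP α (n+2)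
      rw [hq, hp, PP_succ, PP_succ]
      have expand : ((aa α (n+1) : ℝ) * qq α (n+1) + qq α n) * α -
          ((aa α (n+1) : ℝ) * pp α (n+1) + pp α n) =
          (aa α (n+1) : ℝ) * ((qq α (n+1) : ℝ) * α - pp α (n+1)) +
          ((qq α n : ℝ) * α - pp α n) := by ring
      rw [expand, ih2, ih1, PP_succ]
      linear_combination (-(-1:ℝ)^n * PP α n) * h2
  exact fun n => (key n).1

include hα hirr in
lemma I1 : ∀ n, (qq α (n+1) : ℝ) * PP α n + (qq α n : ℝ) * PP α (n+1) = 1 := by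
  have castq : ∀ n, ((aa α n).toNat : ℝ) = (aa α n : ℝ) := by
    intro n
    exact_mod_cast congrArg Int.cast (qq_toNat hα hirr n)
  intro n
  induction n with
  | zero =>
    have hPP0 : PP α 0 = α := by simp [PP, xs]
    have h := xs_rec hα hirr 0
    have hx0 : xs α 0 = α := rfl
    rw [hx0] at h
    show ((aa α 0).toNat : ℝ) * PP α 0 + (1:ℕ) * PP α (0+1) = 1
    rw [castq 0, PP_succ, hPP0]
    push_cast
    linear_combination h
  | succ n ih =>
    have h2 : xs α (n+1) * xs α (n+2) = 1 - aa α (n+1) * xs α (n+1) := xs_rec hα hirr (n+1)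
    have hq : (qq α (n+2) : ℝ) = (aa α (n+1) : ℝ) * qq α (n+1) + qq α n := by
      show ((((aa α (n+1)).toNat) * qq α (n+1) + qq α n : ℕ) : ℝ) = _
      push_cast [castq (n+1)]
      ring
    show (qq α (n+2) : ℝ) * PP α (n+1) + (qq α (n+1) : ℝ) * PP α (n+2) = 1
    rw [hq, PP_succ (n+1), PP_succ n]
    rw [PP_succ n] at ih
    have hx1 : 0 < xs α (n+1) := xs_pos hα hirr (n+1)
    linear_combination ih + ((qq α (n+1) : ℝ) * PP α n) * h2

include hα hirr in
lemma PP_lt (n : ℕ) : (qq α (n+1) : ℝ) * PP α n < 1 := by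
  have h := I1 hα hirr n
  have h1 : 0 < (qq α n : ℝ) := by exact_mod_cast qq_pos hα hirr n
  nlinarith [PP_pos hα hirr (n+1)]

include hα hirr in
lemma det : ∀ n, pp α (n+1) * (qq α n : ℤ) - pp α n * (qq α (n+1) : ℤ) = (-1)^n := by
  intro n
  induction n with
  | zero =>
    show (1:ℤ) * ((1:ℕ) : ℤ) - 0 * _ = 1
    simp
  | succ n ih =>
    have hq : ((qq α (n+2) : ℕ) : ℤ) = aa α (n+1) * qq α (n+1) + qq α n := by
      show ((((aa α (n+1)).toNat) * qq α (n+1) + qq α n : ℕ) : ℤ) = _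
      push_cast [qq_toNat hα hirr (n+1)]
      ring
    show pp α (n+2) * (qq α (n+1) : ℤ) - pp α (n+1) * (qq α (n+2) : ℤ) = (-1)^(n+1)
    have hp : pp α (n+2) = aa α (n+1) * pp α (n+1) + pp α n := rfl
    rw [hp, hq]
    linear_combination (-1 : ℤ) * ih

include hα hirr in
lemma coprime_pq (n : ℕ) : IsCoprime (qq α n : ℤ) (pp α n) := by
  rcases Nat.even_or_odd n with he | ho
  · refine ⟨pp α (n+1), -(qq α (n+1) : ℤ), ?_⟩
    have h := det hα hirr n
    rw [he.neg_one_pow] at h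
    linarith
  · refine ⟨-pp α (n+1), (qq α (n+1) : ℤ), ?_⟩
    have h := det hα hirr n
    rw [ho.neg_one_pow] at h
    linarith

include hα hirr in
lemma qq_upper {M : ℕ} (hM : ∀ n, aa α n ≤ (M : ℤ)) (n : ℕ) :
    qq α (n+1) ≤ (M + 1) * qq α n := by
  have hMn : ∀ m, (aa α m).toNat ≤ M := by
    intro m
    have := hM m
    omega
  cases n with
  | zero =>
    show (aa α 0).toNat ≤ (M+1) * 1
    have := hMn 0
    omega
  | succ n =>
    show (aa α (n+1)).toNat * qq α (n+1) + qq α n ≤ (M+1) * qq α (n+1)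
    have h1 := hMn (n+1)
    have h2 := qq_mono hα hirr (Nat.le_succ n)
    nlinarith

include hα hirr in
lemma qa_bound (n : ℕ) : |(qq α n : ℝ) * α - pp α n| ≤ 1 / qq α n := by
  have hB := Bval hα hirr n
  have hP : 0 < PP α n := PP_pos hα hirr n
  have habs : |(qq α n : ℝ) * α - pp α n| = PP α n := by
    rw [hB, abs_mul, abs_pow, abs_neg, abs_one, one_pow, one_mul, abs_of_pos hP]
  rw [habs]
  have h1 : (qq α (n+1) : ℝ) * PP α n < 1 := PP_lt hα hirr n
  have hq1 : (0:ℝ) < qq α n := by exact_mod_cast qq_pos hα hirr n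
  have hmono : (qq α n : ℝ) ≤ qq α (n+1) := by
    exact_mod_cast qq_mono hα hirr (Nat.le_succ n)
  rw [le_div_iff₀ hq1]
  nlinarith

section FLemmas

open MeasureTheory intervalIntegral

variable {f : ℝ → ℝ} (hper : ∀ x : ℝ, f (x + 1) = f x)
  (hBV : BoundedVariationOn f (Set.Icc 0 1))

include hper in
lemma f_int_shift (t : ℤ) (y : ℝ) : f (y + t) = f y := by
  have hp : Function.Periodic f 1 := hper
  simpa using (hp.int_mul t) y

include hper in
lemma var_shift (t : ℤ) (a b : ℝ) :
    eVariationOn f (Set.Icc (a + t) (b + t)) = eVariationOn f (Set.Icc a b) := by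
  have hφ : MonotoneOn (fun y : ℝ => y + (t:ℝ)) (Set.Icc a b) := fun u _ v _ huv => by
    simpa using huv
  have himg : (fun y : ℝ => y + (t:ℝ)) '' Set.Icc a b = Set.Icc (a + t) (b + t) := by
    rw [Set.image_add_const_Icc]
  have hcomp : (f ∘ fun y : ℝ => y + (t:ℝ)) = f := by
    funext y
    exact f_int_shift hper t y
  rw [← himg, ← eVariationOn.comp_eq_of_monotoneOn f _ hφ, hcomp]

/-- additivity of variation on adjacent intervals -/
lemma var_split {a b c : ℝ} (hab : a ≤ b) (hbc : b ≤ c) (g : ℝ → ℝ) :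
    eVariationOn g (Set.Icc a b) + eVariationOn g (Set.Icc b c) = eVariationOn g (Set.Icc a c) := by
  have := eVariationOn.Icc_add_Icc g (s := Set.univ) hab hbc (Set.mem_univ b)
  simpa using this

include hper in
lemma var_window (y : ℝ) :
    eVariationOn f (Set.Icc y (y + 1)) = eVariationOn f (Set.Icc 0 1) := by
  set t : ℤ := ⌊y⌋
  set y' : ℝ := y - t with hy'
  have h1 : Set.Icc y (y + 1) = Set.Icc (y' + t) (y' + 1 + t) := by
    congr 1 <;> simp [hy'] <;> ring
  have hy0 : 0 ≤ y' := by
    have := Int.floor_le y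
    rw [hy']
    linarith
  have hy1 : y' ≤ 1 := by
    have := Int.lt_floor_add_one y
    rw [hy']
    push_cast
    linarith
  rw [h1, var_shift hper t y' (y' + 1)]
  have h2 : eVariationOn f (Set.Icc y' 1) + eVariationOn f (Set.Icc 1 (y' + 1)) =
      eVariationOn f (Set.Icc y' (y' + 1)) := var_split hy1 (by linarith) f
  have h3 : eVariationOn f (Set.Icc 1 (y' + 1)) = eVariationOn f (Set.Icc 0 y') := by
    have := var_shift hper 1 0 y'
    rw [show (0:ℝ) + (1:ℤ) = 1 by push_cast; ring, show y' + ((1:ℤ):ℝ) = y' + 1 by push_cast; ring]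
      at this
    exact this
  have h4 : eVariationOn f (Set.Icc 0 y') + eVariationOn f (Set.Icc y' 1) =
      eVariationOn f (Set.Icc 0 1) := var_split hy0 hy1 f
  rw [← h2, h3, add_comm, h4]

include hper hBV in
lemma bv_window (y : ℝ) : BoundedVariationOn f (Set.Icc y (y + 1)) := by
  rw [BoundedVariationOn, var_window hper y]
  exact hBV

include hper hBV in
lemma bv_sub {a b : ℝ} (hab : a ≤ b) (hb : b ≤ a + 1) :
    BoundedVariationOn f (Set.Icc a b) :=
  (bv_window hper hBV a).mono (Set.Icc_subset_Icc le_rfl hb)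

include hper hBV in
lemma f_intble {a b : ℝ} (hab : a ≤ b) (hb : b ≤ a + 1) :
    IntervalIntegrable f MeasureTheory.volume a b := by
  obtain ⟨p, q, hp, hq, hpq⟩ :=
    ((bv_sub hper hBV hab hb).locallyBoundedVariationOn).exists_monotoneOn_sub_monotoneOn
  have huIcc : Set.uIcc a b = Set.Icc a b := Set.uIcc_of_le hab
  rw [hpq]
  rw [← huIcc] at hp hq
  exact hp.intervalIntegrable.sub hq.intervalIntegrable

include hper in
lemma int_window (hint : (∫ x in (0:ℝ)..1, f x) = 0) (y : ℝ) :
    (∫ x in y..(y+1), f x) = 0 := by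
  have hp : Function.Periodic f 1 := hper
  have := hp.intervalIntegral_add_eq y 0
  simpa [this] using hint

include hper hBV in
lemma dist_bound {a b u v : ℝ} (hab : a ≤ b) (hb : b ≤ a + 1) (hu : u ∈ Set.Icc a b)
    (hv : v ∈ Set.Icc a b) : |f u - f v| ≤ (eVariationOn f (Set.Icc a b)).toReal := by
  have := (bv_sub hper hBV hab hb).dist_le hu hv
  rwa [Real.dist_eq] at this

include hper in
lemma telescope_evar (y : ℝ) {q : ℕ} (hq : 0 < q) :
    ∑ j ∈ Finset.range q, eVariationOn f (Set.Icc (y + j/q) (y + (j+1)/q)) =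
      eVariationOn f (Set.Icc 0 1) := by
  have hq' : (0:ℝ) < q := by exact_mod_cast hq
  have partial_sum : ∀ m : ℕ,
      ∑ j ∈ Finset.range m, eVariationOn f (Set.Icc (y + j/q) (y + (j+1)/q)) =
        eVariationOn f (Set.Icc y (y + m/q)) := by
    intro m
    induction m with
    | zero =>
      simp only [Finset.range_zero, Finset.sum_empty, Nat.cast_zero, zero_div, add_zero]
      exact (eVariationOn.subsingleton f
        (by rw [Set.Icc_self]; exact Set.subsingleton_singleton)).symm
    | succ m ih =>
      rw [Finset.sum_range_succ, ih]
      have h1 : y ≤ y + m/q := by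
        have : (0:ℝ) ≤ (m:ℝ)/q := by positivity
        linarith
      have h2 : y + (m:ℝ)/q ≤ y + ((m:ℝ)+1)/q := by
        gcongr
        linarith
      have := var_split h1 h2 f
      push_cast
      rw [this]
  have := partial_sum q
  rw [div_self (ne_of_gt hq')] at this
  rw [this, var_window hper y]

/-- reindexing a sum along multiplication by `p` mod `q` -/
lemma sigma_reindex {q : ℕ} (hq : 0 < q) {p : ℤ} (hcop : IsCoprime (q:ℤ) p) (g : ℕ → ℝ) :
    ∑ k ∈ Finset.range q, g ((k * p % (q:ℤ)).toNat) = ∑ j ∈ Finset.range q, g j := by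
  set σ : ℕ → ℕ := fun k => ((k:ℤ) * p % (q:ℤ)).toNat with hσ
  have hqz : (q:ℤ) ≠ 0 := by exact_mod_cast hq.ne'
  have hmem : ∀ k, σ k < q := by
    intro k
    show ((k:ℤ) * p % (q:ℤ)).toNat < q
    have h0 : 0 ≤ (k:ℤ) * p % (q:ℤ) := Int.emod_nonneg _ hqz
    have h1 : (k:ℤ) * p % (q:ℤ) < q := Int.emod_lt_of_pos _ (by exact_mod_cast hq)
    omega
  have hinj : ∀ k₁ ∈ Finset.range q, ∀ k₂ ∈ Finset.range q, σ k₁ = σ k₂ → k₁ = k₂ := by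
    intro k₁ h₁ k₂ h₂ heq
    rw [Finset.mem_range] at h₁ h₂
    have h0 : ∀ k : ℕ, 0 ≤ (k:ℤ) * p % (q:ℤ) := fun k => Int.emod_nonneg _ hqz
    have heq' : (k₁:ℤ) * p % (q:ℤ) = (k₂:ℤ) * p % (q:ℤ) := by
      have := congrArg (fun m : ℕ => (m:ℤ)) heq
      simpa [hσ, Int.toNat_of_nonneg (h0 k₁), Int.toNat_of_nonneg (h0 k₂)] using this
    have hdvd : (q:ℤ) ∣ ((k₂:ℤ) - k₁) * p := by
      have : (q:ℤ) ∣ (k₂:ℤ) * p - (k₁:ℤ) * p := Int.ModEq.dvd heq'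
      rwa [← sub_mul] at this
    have hdvd2 : (q:ℤ) ∣ ((k₂:ℤ) - k₁) := hcop.dvd_of_dvd_mul_right hdvd
    have habs : ((k₂:ℤ) - k₁).natAbs < q := by omega
    have hz := Nat.eq_zero_of_dvd_of_lt (Int.natCast_dvd.mp hdvd2) habs
    omega
  have himg : Finset.image σ (Finset.range q) = Finset.range q := by
    apply Finset.eq_of_subset_of_card_le
    · intro j hj
      rw [Finset.mem_image] at hj
      obtain ⟨k, _, rfl⟩ := hj
      exact Finset.mem_range.mpr (hmem k)
    · rw [Finset.card_image_of_injOn (fun a ha b hb h => hinj a ha b hb h)]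
  conv_rhs => rw [← himg]
  rw [Finset.sum_image hinj]

end FLemmas

section FLemmas2

open MeasureTheory intervalIntegral

variable {f : ℝ → ℝ} (hper : ∀ x : ℝ, f (x + 1) = f x)
  (hBV : BoundedVariationOn f (Set.Icc 0 1))

include hper hBV in
lemma bv_sub2 {a b : ℝ} (hab : a ≤ b) (hb : b ≤ a + 2) :
    BoundedVariationOn f (Set.Icc a b) := by
  have h2 : BoundedVariationOn f (Set.Icc a (a + 2)) := by
    rw [BoundedVariationOn, ← var_split (by linarith : a ≤ a + 1) (by linarith : a + 1 ≤ a + 2) f]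
    have w1 := bv_window hper hBV a
    have w2 := bv_window hper hBV (a + 1)
    rw [show a + 1 + 1 = a + 2 by ring] at w2
    exact ENNReal.add_ne_top.mpr ⟨w1, w2⟩
  exact h2.mono (Set.Icc_subset_Icc le_rfl hb)

include hper hBV in
lemma dist_bound2 {a b u v : ℝ} (hab : a ≤ b) (hb : b ≤ a + 2) (hu : u ∈ Set.Icc a b)
    (hv : v ∈ Set.Icc a b) : |f u - f v| ≤ (eVariationOn f (Set.Icc a b)).toReal := by
  have := (bv_sub2 hper hBV hab hb).dist_le hu hv
  rwa [Real.dist_eq] at this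

end FLemmas2

section DK

open MeasureTheory intervalIntegral

variable {f : ℝ → ℝ} (hper : ∀ x : ℝ, f (x + 1) = f x)
  (hBV : BoundedVariationOn f (Set.Icc 0 1))
  (hint : (∫ x in (0:ℝ)..1, f x) = 0)

include hα hirr hper hBV hint in
set_option maxHeartbeats 2000000 in
lemma dk (m : ℕ) (x : ℝ) :
    |∑ k ∈ Finset.range (qq α m), f (x + k * α)| ≤
      2 * (eVariationOn f (Set.Icc 0 1)).toReal := by
  set V : ℝ := (eVariationOn f (Set.Icc 0 1)).toReal with hV
  set q : ℕ := qq α m with hqdef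
  set p : ℤ := pp α m with hpdef
  have hq : 0 < q := qq_pos hα hirr m
  have hq' : (0:ℝ) < q := by exact_mod_cast hq
  have hq1 : (1:ℝ) ≤ q := by exact_mod_cast hq
  have hinvq : 1/(q:ℝ) ≤ 1 := by
    rw [div_le_one hq']; exact hq1
  have hinvq0 : 0 < 1/(q:ℝ) := by positivity
  have hcop : IsCoprime (q:ℤ) p := coprime_pq hα hirr m
  have hQ : |(q:ℝ)*α - p| ≤ 1/q := qa_bound hα hirr m
  set σ : ℕ → ℕ := fun k => (((k:ℤ) * p) % (q:ℤ)).toNat with hσ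
  set g : ℕ → ℝ := fun j => ∫ t in (x + j/q)..(x + j/q + 1/q), f t with hg
  set h : ℕ → ℝ := fun j =>
    (eVariationOn f (Set.Icc (x - 1/q + j/q) (x - 1/q + (j+1)/q))).toReal +
    (eVariationOn f (Set.Icc (x + j/q) (x + (j+1)/q))).toReal with hh
  -- Step A : per-term bound
  have stepA : ∀ k ∈ Finset.range q, |f (x + k * α) - q * g (σ k)| ≤ h (σ k) := by
    intro k hk
    rw [Finset.mem_range] at hk
    set j : ℕ := σ k with hj
    set t : ℤ := ((k:ℤ) * p) / (q:ℤ) with ht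
    have hjz : (j:ℤ) = ((k:ℤ) * p) % (q:ℤ) := by
      rw [hj, hσ]
      exact Int.toNat_of_nonneg (Int.emod_nonneg _ (by exact_mod_cast hq.ne'))
    have hdm : (q:ℤ) * t + (j:ℤ) = (k:ℤ) * p := by
      rw [ht, hjz]; exact Int.mul_ediv_add_emod _ _
    set δ : ℝ := (k:ℝ) * α - (k:ℝ) * p / q with hδ
    have hdecomp : x + k * α = (x + j/q + δ) + t := by
      have hdmr : (q:ℝ) * t + (j:ℝ) = (k:ℝ) * p := by exact_mod_cast congrArg Int.cast hdm
      rw [hδ]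
      field_simp
      linarith [hdmr]
    have hδb : |δ| ≤ 1/q := by
      have hδeq : δ = ((k:ℝ)/q) * ((q:ℝ)*α - p) := by rw [hδ]; field_simp
      rw [hδeq, abs_mul]
      have h1 : |(k:ℝ)/q| ≤ 1 := by
        rw [abs_of_nonneg (by positivity), div_le_one hq']
        exact_mod_cast hk.le
      calc |(k:ℝ)/q| * |(q:ℝ)*α - p| ≤ 1 * (1/q) :=
            mul_le_mul h1 hQ (abs_nonneg _) zero_le_one
        _ = 1/q := one_mul _
    have hfw : f (x + k * α) = f (x + j/q + δ) := by
      rw [hdecomp]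
      exact f_int_shift hper t _
    -- the window K
    set lo : ℝ := x + j/q - 1/q with hlo
    set hi : ℝ := x + j/q + 1/q with hhi
    have hlohi : lo ≤ hi := by rw [hlo, hhi]; linarith
    have hwidth : hi ≤ lo + 2 := by rw [hlo, hhi]; linarith
    have hwK : x + j/q + δ ∈ Set.Icc lo hi := by
      constructor
      · rw [hlo]; have := abs_le.mp hδb; linarith [this.1]
      · rw [hhi]; have := abs_le.mp hδb; linarith [this.2]
    have hIK : Set.Icc (x + j/q) (x + j/q + 1/q) ⊆ Set.Icc lo hi :=
      Set.Icc_subset_Icc (by rw [hlo]; linarith) le_rfl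
    set C : ℝ := (eVariationOn f (Set.Icc lo hi)).toReal with hC
    have hintble : IntervalIntegrable f volume (x + j/q) (x + j/q + 1/q) :=
      f_intble hper hBV (by linarith) (by linarith)
    have key : f (x + j/q + δ) - q * g j = q * ∫ s in (x + j/q)..(x + j/q + 1/q),
        (f (x + j/q + δ) - f s) := by
      rw [intervalIntegral.integral_sub (intervalIntegrable_const) hintble,
        intervalIntegral.integral_const]
      simp only [hg]
      simp only [smul_eq_mul]
      field_simp
      try ring
    have hbd : ∀ s ∈ Set.uIoc (x + j/q) (x + j/q + 1/q), ‖f (x + j/q + δ) - f s‖ ≤ C := by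
      intro s hs
      rw [Set.uIoc_of_le (by linarith)] at hs
      have hs' : s ∈ Set.Icc lo hi := hIK ⟨hs.1.le, hs.2⟩
      exact dist_bound2 hper hBV hlohi hwidth hwK hs'
    have hnorm := intervalIntegral.norm_integral_le_of_norm_le_const hbd
    rw [show x + j/q + 1/q - (x + j/q) = 1/q by ring, abs_of_pos hinvq0] at hnorm
    have hterm : |f (x + j/q + δ) - q * g j| ≤ C := by
      rw [key, abs_mul, abs_of_pos hq']
      calc (q:ℝ) * |∫ s in (x + j/q)..(x + j/q + 1/q), (f (x + j/q + δ) - f s)|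
          ≤ q * (C * (1/q)) := by
            apply mul_le_mul_of_nonneg_left _ hq'.le
            exact hnorm
        _ = C := by field_simp
    -- C ≤ h j
    have hCh : C ≤ h j := by
      have hsplit : eVariationOn f (Set.Icc lo (x + j/q)) +
          eVariationOn f (Set.Icc (x + j/q) hi) = eVariationOn f (Set.Icc lo hi) :=
        var_split (by rw [hlo]; linarith) (by rw [hhi]; linarith) f
      have hfin1 : eVariationOn f (Set.Icc lo (x + j/q)) ≠ ⊤ :=
        bv_sub hper hBV (by rw [hlo]; linarith) (by rw [hlo]; linarith)
      have hfin2 : eVariationOn f (Set.Icc (x + j/q) hi) ≠ ⊤ :=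
        bv_sub hper hBV (by rw [hhi]; linarith) (by rw [hhi]; linarith)
      have heq1 : Set.Icc lo (x + j/q) = Set.Icc (x - 1/q + j/q) (x - 1/q + ((j:ℝ)+1)/q) := by
        rw [hlo]
        congr 1 <;> field_simp <;> ring
      have heq2 : Set.Icc (x + j/q) hi = Set.Icc (x + j/q) (x + ((j:ℝ)+1)/q) := by
        rw [hhi]
        congr 1
        field_simp
        ring
      rw [hC, ← hsplit, ENNReal.toReal_add hfin1 hfin2]
      simp only [hh]
      rw [heq1, heq2]
    linarith [hfw ▸ hterm]
  -- Step B : the integrals sum to zero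
  have stepB : ∑ k ∈ Finset.range q, g (σ k) = 0 := by
    rw [hσ]
    rw [sigma_reindex hq hcop g]
    have haseq : ∀ i, i < q → IntervalIntegrable f volume (x + i/q) (x + (i+1)/q) := by
      intro i _
      apply f_intble hper hBV
      · have : (i:ℝ)/q ≤ ((i:ℝ)+1)/q := by gcongr; linarith
        linarith
      · have h1 : ((i:ℝ)+1)/q - (i:ℝ)/q = 1/q := by field_simp; ring
        nlinarith [hinvq]
    have hAdj := intervalIntegral.sum_integral_adjacent_intervals
      (a := fun i : ℕ => x + i/q) (μ := volume) (n := q) (fun i hi => by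
        have h1 := haseq i hi
        push_cast
        exact h1)
    push_cast at hAdj
    rw [show x + (0:ℝ)/(q:ℝ) = x by ring, div_self hq'.ne'] at hAdj
    have hgeq : ∀ j : ℕ, g j = ∫ s in (x + j/q)..(x + ((j:ℝ)+1)/q), f s := by
      intro j
      simp only [hg]
      congr 1
      field_simp
      try ring
    calc ∑ j ∈ Finset.range q, g j
        = ∑ j ∈ Finset.range q, ∫ s in (x + j/q)..(x + ((j:ℝ)+1)/(q:ℝ)), f s :=
          Finset.sum_congr rfl fun j _ => hgeq j
      _ = ∫ s in x..(x+1), f s := hAdj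
      _ = 0 := int_window hper hint x
  -- Step C : the variation terms sum to 2V
  have stepC : ∑ k ∈ Finset.range q, h (σ k) = 2 * V := by
    rw [hσ, sigma_reindex hq hcop h]
    have htel : ∀ y : ℝ, ∑ j ∈ Finset.range q,
        (eVariationOn f (Set.Icc (y + j/q) (y + ((j:ℝ)+1)/q))).toReal = V := by
      intro y
      have hfin : ∀ j ∈ Finset.range q,
          eVariationOn f (Set.Icc (y + j/q) (y + ((j:ℝ)+1)/q)) ≠ ⊤ := by
        intro j _
        apply bv_sub hper hBV
        · have : (j:ℝ)/q ≤ ((j:ℝ)+1)/q := by gcongr; linarith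
          linarith
        · have h1 : ((j:ℝ)+1)/q - (j:ℝ)/q = 1/q := by field_simp; ring
          nlinarith [hinvq]
      rw [← ENNReal.toReal_sum hfin, telescope_evar hper y hq]
    have h1 := htel (x - 1/q)
    have h2 := htel x
    simp only [hh]
    rw [Finset.sum_add_distrib, h1, h2]
    ring
  -- assemble
  have hsum : ∑ k ∈ Finset.range q, f (x + k * α) =
      ∑ k ∈ Finset.range q, (f (x + k * α) - q * g (σ k)) := by
    rw [Finset.sum_sub_distrib]
    rw [← Finset.mul_sum, stepB]
    ring
  rw [hsum]
  calc |∑ k ∈ Finset.range q, (f (x + k * α) - q * g (σ k))|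
      ≤ ∑ k ∈ Finset.range q, |f (x + k * α) - q * g (σ k)| :=
        Finset.abs_sum_le_sum_abs _ _
    _ ≤ ∑ k ∈ Finset.range q, h (σ k) := Finset.sum_le_sum stepA
    _ = 2 * V := stepC

end DK

section Assemble

open MeasureTheory

lemma S_add (f : ℝ → ℝ) (α x : ℝ) (m r : ℕ) :
    ∑ k ∈ Finset.range (m+r), f (x + k*α) =
      (∑ k ∈ Finset.range m, f (x + k*α)) + ∑ k ∈ Finset.range r, f ((x + m*α) + k*α) := by
  rw [Finset.range_eq_Ico, ← Finset.sum_Ico_consecutive _ (Nat.zero_le m) (Nat.le_add_right m r),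
    ← Finset.range_eq_Ico, Finset.sum_Ico_eq_sum_range]
  congr 1
  rw [show m + r - m = r by omega]
  apply Finset.sum_congr rfl
  intro k _
  congr 1
  push_cast
  ring

lemma S_mul (f : ℝ → ℝ) (α x : ℝ) (q : ℕ) :
    ∀ b : ℕ, ∑ k ∈ Finset.range (b*q), f (x + k*α) =
      ∑ i ∈ Finset.range b, ∑ k ∈ Finset.range q, f ((x + (i*q)*α) + k*α) := by
  intro b
  induction b with
  | zero => simp
  | succ b ih =>
    have hbq : (b+1)*q = b*q + q := by ring
    rw [hbq, S_add, ih, Finset.sum_range_succ]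
    congr 2
    push_cast
    ring

end Assemble

end BirkhoffAux


open BirkhoffAux in
/-- uniform sub-polynomial Birkhoff sum bounds for bounded-type
rotations: for every `M` there are `C > 0` and `γ ∈ (0,1)` such that for every
irrational `α ∈ (0,1)` with continued fraction entries bounded by `M`, every
1-periodic mean-zero function of bounded variation `f`, every `x` and every `n ≥ 1`,
`|∑_{k<n} f(x + kα)| ≤ C · Var_{[0,1]}(f) · n^γ`. -/
theorem birkhoff_sum_bound_bounded_type (M : ℕ) :
    ∃ C > (0:ℝ), ∃ γ ∈ Set.Ioo (0:ℝ) 1,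
      ∀ α : ℝ, α ∈ Set.Ioo (0:ℝ) 1 → Irrational α →
        (∀ n : ℕ, 1 ≤ n → cfA α n ≤ (M : ℤ)) →
        ∀ f : ℝ → ℝ, (∀ x : ℝ, f (x + 1) = f x) →
          BoundedVariationOn f (Set.Icc 0 1) →
          (∫ x in (0:ℝ)..1, f x) = 0 →
          ∀ x : ℝ, ∀ n : ℕ, 1 ≤ n →
            |∑ k ∈ Finset.range n, f (x + k * α)| ≤
              C * (eVariationOn f (Set.Icc 0 1)).toReal * (n : ℝ) ^ γ := by
  classical
  set N : ℕ := max M 1 with hN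
  set ρ : ℝ := (N : ℝ)/(N+1) with hρ
  have hN1 : 1 ≤ N := le_max_right M 1
  have hN' : (1:ℝ) ≤ (N:ℝ) := by exact_mod_cast hN1
  have hρ0 : 0 ≤ ρ := by positivity
  have hρ1 : ρ < 1 := by rw [hρ, div_lt_one (by linarith)]; linarith
  have hs0 : 0 ≤ Real.sqrt ρ := Real.sqrt_nonneg ρ
  have hs1 : Real.sqrt ρ < 1 := by
    have := Real.sqrt_lt_sqrt hρ0 hρ1
    simpa using this
  set C : ℝ := 2 * N / (1 - Real.sqrt ρ) with hC
  have hCpos : 0 < C := by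
    apply div_pos (by linarith) (by linarith)
  have hCid : C * (1 - Real.sqrt ρ) = 2 * N := by
    rw [hC]
    exact div_mul_cancel₀ _ (by linarith)
  refine ⟨C, hCpos, 1/2, ⟨by norm_num, by norm_num⟩, ?_⟩
  intro α hα hirr hcf f hper hBV hint x₀ n₀ hn₀
  have haa : ∀ m : ℕ, aa α m ≤ (M:ℤ) := by
    intro m
    have := hcf (m+1) (by omega)
    rwa [cfA_eq] at this
  have hM1 : 1 ≤ M := by
    have h1 := aa_one_le hα hirr 0
    have h2 := haa 0
    omega
  have hNM : N = M := max_eq_left hM1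
  set V : ℝ := (eVariationOn f (Set.Icc 0 1)).toReal with hV
  have hV0 : 0 ≤ V := ENNReal.toReal_nonneg
  have main : ∀ n : ℕ, ∀ x : ℝ, |∑ k ∈ Finset.range n, f (x + k*α)| ≤ C * V * Real.sqrt n := by
    intro n
    induction n using Nat.strong_induction_on with
    | _ n ih =>
      intro x
      rcases Nat.eq_zero_or_pos n with rfl | hn1
      · simp
      have hq0n : qq α 0 ≤ n := hn1
      set K := Nat.findGreatest (fun k => qq α k ≤ n) n with hK
      have hKspec : qq α K ≤ n :=
        Nat.findGreatest_spec (P := fun k => qq α k ≤ n) (Nat.zero_le n) hq0n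
      have hKsucc : n < qq α (K+1) := by
        by_cases hcase : K + 1 ≤ n
        · have h := Nat.findGreatest_is_greatest (P := fun k => qq α k ≤ n)
            (Nat.lt_succ_self K) hcase
          have h' : ¬ (qq α (K + 1) ≤ n) := by simpa using h
          omega
        · have := qq_ge hα hirr (K+1)
          omega
      have hQpos : 0 < qq α K := qq_pos hα hirr K
      have hQup : qq α (K+1) ≤ (M+1) * qq α K := qq_upper hα hirr haa K
      set b := n / qq α K with hb
      set r := n % qq α K with hr
      have hnbr : n = b * qq α K + r := by
        rw [hb, hr, Nat.mul_comm]
        exact (Nat.div_add_mod n (qq α K)).symm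
      have hb1 : 1 ≤ b := (Nat.one_le_div_iff hQpos).mpr hKspec
      have hbM : b ≤ M := by
        have h1 : b * qq α K ≤ n := Nat.div_mul_le_self n (qq α K)
        have h2 : b * qq α K < (M+1) * qq α K :=
          lt_of_le_of_lt h1 (lt_of_lt_of_le hKsucc hQup)
        have := Nat.lt_of_mul_lt_mul_right h2
        omega
      have hrQ : r < qq α K := Nat.mod_lt n hQpos
      have hrlt : r < n := by omega
      have hrn : (r:ℝ) ≤ ρ * n := by
        have h2 : (n:ℝ) < ((M:ℝ)+1) * qq α K := by exact_mod_cast lt_of_lt_of_le hKsucc hQup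
        have h3 : r + qq α K ≤ n := by
          have : qq α K ≤ b * qq α K := Nat.le_mul_of_pos_left _ hb1
          omega
        have h4 : (r:ℝ) + qq α K ≤ n := by exact_mod_cast h3
        have hM1' : (0:ℝ) < (M:ℝ)+1 := by positivity
        have h5 : (n:ℝ)/((M:ℝ)+1) < qq α K := by
          rw [div_lt_iff₀ hM1']
          linarith
        have hρM : ρ = (M:ℝ)/((M:ℝ)+1) := by
          rw [hρ, hNM]
        rw [hρM]
        have hfe : (n:ℝ) - (n:ℝ)/((M:ℝ)+1) = (M:ℝ)/((M:ℝ)+1) * n := by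
          field_simp
          ring
        linarith
      have hdec : ∑ k ∈ Finset.range n, f (x + k*α) =
          (∑ i ∈ Finset.range b, ∑ k ∈ Finset.range (qq α K),
            f ((x + (i * qq α K) * α) + k*α))
          + ∑ k ∈ Finset.range r, f ((x + (b * qq α K : ℕ) * α) + k*α) := by
        conv_lhs => rw [hnbr]
        rw [S_add f α x (b * qq α K) r, S_mul f α x (qq α K) b]
      have hblocks : ∀ i : ℕ, |∑ k ∈ Finset.range (qq α K),
          f ((x + (i * qq α K) * α) + k*α)| ≤ 2 * V :=
        fun i => dk hα hirr hper hBV hint K _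
      have htail : |∑ k ∈ Finset.range r, f ((x + (b * qq α K : ℕ) * α) + k*α)| ≤
          C * V * Real.sqrt r := ih r hrlt _
      have hsqr : Real.sqrt r ≤ Real.sqrt ρ * Real.sqrt n := by
        rw [← Real.sqrt_mul hρ0]
        exact Real.sqrt_le_sqrt hrn
      have hsq1 : 1 ≤ Real.sqrt n := by
        have : (1:ℝ) ≤ (n:ℝ) := by exact_mod_cast hn1
        simpa using Real.sqrt_le_sqrt this
      have hbN : (b:ℝ) ≤ (N:ℝ) := by
        rw [hNM]
        exact_mod_cast hbM
      calc |∑ k ∈ Finset.range n, f (x + k*α)|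
          ≤ (∑ i ∈ Finset.range b, |∑ k ∈ Finset.range (qq α K),
              f ((x + (i * qq α K) * α) + k*α)|)
            + |∑ k ∈ Finset.range r, f ((x + (b * qq α K : ℕ) * α) + k*α)| := by
            rw [hdec]
            have h1 := abs_add_le
              (∑ i ∈ Finset.range b, ∑ k ∈ Finset.range (qq α K),
                f ((x + (i * qq α K) * α) + k*α))
              (∑ k ∈ Finset.range r, f ((x + (b * qq α K : ℕ) * α) + k*α))
            have h2 := Finset.abs_sum_le_sum_abs
              (fun i : ℕ => ∑ k ∈ Finset.range (qq α K),
                f (x + (i:ℝ) * ((qq α K : ℕ):ℝ) * α + (k:ℝ) * α))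
              (Finset.range b)
            linarith
        _ ≤ (∑ _i ∈ Finset.range b, 2 * V) + C * V * Real.sqrt r := by
            have hsum := Finset.sum_le_sum (fun i (_ : i ∈ Finset.range b) => hblocks i)
            have := htail
            linarith
        _ = (b:ℝ) * (2 * V) + C * V * Real.sqrt r := by
            rw [Finset.sum_const, Finset.card_range]
            simp
        _ ≤ C * V * Real.sqrt n := by
            have t3 : C * V * Real.sqrt r ≤ C * V * (Real.sqrt ρ * Real.sqrt n) := by
              apply mul_le_mul_of_nonneg_left hsqr (by positivity)
            have e : C * V * Real.sqrt n - C * V * (Real.sqrt ρ * Real.sqrt n) =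
                2 * (N:ℝ) * V * Real.sqrt n := by
              linear_combination (V * Real.sqrt n) * hCid
            have f1 : (b:ℝ) * (2 * V) ≤ (N:ℝ) * (2 * V) := by
              apply mul_le_mul_of_nonneg_right hbN (by linarith)
            have f2 : (N:ℝ) * (2 * V) ≤ 2 * (N:ℝ) * V * Real.sqrt n := by
              nlinarith [mul_nonneg (mul_nonneg (by linarith : (0:ℝ) ≤ 2*(N:ℝ)) hV0)
                (by linarith : (0:ℝ) ≤ Real.sqrt n - 1)]
            linarith
  have hfin := main n₀ x₀
  have hpow : ((n₀:ℝ)) ^ ((1:ℝ)/2) = Real.sqrt n₀ := (Real.sqrt_eq_rpow _).symm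
  rw [hpow]
  exact hfin
end

section
/- The Gauss map G : [0,1] → [0,1], defined by G(x) := Int.fract(1/x) for x ≠ 0 and G(0) := 0, preserves the Gauss measure μ_G, the measure on [0,1] with density x ↦ 1/((1+x) · log 2) with respect to Lebesgue measure, and moreover G is ergodic with respect to μ_G: every Borel set A ⊆ [0,1] with G⁻¹(A) = A (up to μ_G-null sets) satisfies μ_G(A) = 0 or μ_G(A) = 1. -/
open MeasureTheory
open scoped symmDiff

/-- The Gauss measure on `[0,1]`: density `1/((1+x) log 2)` with respect to Lebesgue
measure restricted to `[0,1]`. -/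
noncomputable def gaussMeasure : Measure ℝ :=
  (volume.restrict (Set.Icc (0:ℝ) 1)).withDensity
    (fun x => ENNReal.ofReal (1 / ((1 + x) * Real.log 2)))

section GaussAuxSection

open MeasureTheory Set Filter Topology
open scoped symmDiff ENNReal

namespace GaussAux


/-- Möbius map state `y ↦ (pa y + pb)/(qa y + qb)`. -/
structure CF where
  pa : ℝ
  pb : ℝ
  qa : ℝ
  qb : ℝ

namespace CF

noncomputable def f (s : CF) (y : ℝ) : ℝ := (s.pa * y + s.pb) / (s.qa * y + s.qb)

def det (s : CF) : ℝ := s.pa * s.qb - s.pb * s.qa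

def step (s : CF) (α : ℝ) : CF := ⟨s.pb, s.pb * α + s.pa, s.qb, s.qb * α + s.qa⟩

/-- invariants of the states appearing for rank `≥ 1`. -/
structure Inv (s : CF) : Prop where
  pa_nonneg : 0 ≤ s.pa
  pa_le : s.pa ≤ s.qa
  pb_nonneg : 0 ≤ s.pb
  pb_le : s.pb ≤ s.qb
  qa_nonneg : 0 ≤ s.qa
  qa_le : s.qa ≤ s.qb
  one_le_qb : 1 ≤ s.qb
  det_eq : s.det = 1 ∨ s.det = -1

theorem Inv.step {s : CF} (h : Inv s) {α : ℝ} (hα : 1 ≤ α) : Inv (s.step α) := by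
  obtain ⟨h1, h2, h3, h4, h5, h6, h7, h8⟩ := h
  constructor <;> simp only [CF.step, CF.det] at *
  · exact h3
  · exact h4
  · nlinarith
  · nlinarith
  · linarith
  · nlinarith
  · nlinarith
  · rcases h8 with h8 | h8 <;> [right; left] <;> nlinarith

theorem Inv.den_pos {s : CF} (h : Inv s) {y : ℝ} (hy : 0 ≤ y) : 0 < s.qa * y + s.qb := by
  nlinarith [h.qa_nonneg, h.one_le_qb]

theorem Inv.den_le {s : CF} (h : Inv s) {y : ℝ} (hy0 : 0 ≤ y) (hy1 : y ≤ 1) :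
    s.qa * y + s.qb ≤ s.qa + s.qb := by nlinarith [h.qa_nonneg]

theorem f_sub (s : CF) {y z : ℝ} (hy : s.qa * y + s.qb ≠ 0) (hz : s.qa * z + s.qb ≠ 0) :
    s.f y - s.f z = s.det * (y - z) / ((s.qa * y + s.qb) * (s.qa * z + s.qb)) := by
  simp only [CF.f, CF.det]
  rw [div_sub_div _ _ hy hz]
  congr 1; ring

theorem Inv.abs_det {s : CF} (h : Inv s) : |s.det| = 1 := by
  rcases h.det_eq with h | h <;> simp [h]

theorem Inv.mem_Icc {s : CF} (h : Inv s) {y : ℝ} (hy0 : 0 ≤ y) (hy1 : y ≤ 1) :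
    s.f y ∈ Icc (0:ℝ) 1 := by
  have hd : 0 < s.qa * y + s.qb := h.den_pos hy0
  constructor
  · apply div_nonneg _ hd.le
    nlinarith [h.pa_nonneg, h.pb_nonneg]
  · show (s.pa * y + s.pb) / (s.qa * y + s.qb) ≤ 1
    rw [div_le_one hd]
    nlinarith [h.pa_le, h.pb_le]

theorem Inv.injOn {s : CF} (h : Inv s) : InjOn s.f (Icc (0:ℝ) 1) := by
  intro y hy z hz hyz
  have h1 : s.qa * y + s.qb ≠ 0 := (h.den_pos hy.1).ne'
  have h2 : s.qa * z + s.qb ≠ 0 := (h.den_pos hz.1).ne'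
  have := s.f_sub h1 h2
  rw [hyz, sub_self] at this
  have hdet : s.det ≠ 0 := by rcases h.det_eq with h | h <;> simp [h]
  have := this.symm
  rw [div_eq_zero_iff] at this
  rcases this with this | this
  · rcases mul_eq_zero.1 this with h' | h'
    · exact absurd h' hdet
    · linarith [sub_eq_zero.1 h']
  · exact absurd this (by positivity)

/-- `f` has the expected derivative. -/
theorem Inv.hasDerivAt_f {s : CF} (h : Inv s) {y : ℝ} (hy : 0 ≤ y) :
    HasDerivAt s.f (s.det / (s.qa * y + s.qb) ^ 2) y := by
  have hd : s.qa * y + s.qb ≠ 0 := (h.den_pos hy).ne'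
  have h1 : HasDerivAt (fun y : ℝ => s.pa * y + s.pb) s.pa y := by
    simpa using ((hasDerivAt_id y).const_mul s.pa).add_const s.pb
  have h2 : HasDerivAt (fun y : ℝ => s.qa * y + s.qb) s.qa y := by
    simpa using ((hasDerivAt_id y).const_mul s.qa).add_const s.qb
  have := h1.div h2 hd
  refine this.congr_deriv ?_
  simp only [CF.det]
  field_simp
  ring

theorem Inv.volume_image_eq {s : CF} (h : Inv s) {B : Set ℝ} (hBm : MeasurableSet B)
    (hB : B ⊆ Icc (0:ℝ) 1) :
    volume (s.f '' B) = ∫⁻ x in B, ENNReal.ofReal |s.det / (s.qa * x + s.qb) ^ 2| := by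
  rw [← MeasureTheory.lintegral_abs_det_fderiv_eq_addHaar_image volume hBm
      (f' := fun x => ContinuousLinearMap.smulRight (1 : ℝ →L[ℝ] ℝ)
        (s.det / (s.qa * x + s.qb) ^ 2))
      (fun x hx => ((h.hasDerivAt_f (hB hx).1).hasDerivWithinAt).hasFDerivWithinAt)
      (h.injOn.mono hB)]
  simp [ContinuousLinearMap.det_toSpanSingleton]

theorem Inv.le_volume_image {s : CF} (h : Inv s) {B : Set ℝ} (hBm : MeasurableSet B)
    (hB : B ⊆ Icc (0:ℝ) 1) :
    ENNReal.ofReal (1 / (s.qa + s.qb) ^ 2) * volume B ≤ volume (s.f '' B) := by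
  rw [h.volume_image_eq hBm hB, ← MeasureTheory.setLIntegral_const B _]
  apply MeasureTheory.setLIntegral_mono
  · apply Measurable.ennreal_ofReal
    apply Measurable.abs
    exact measurable_const.div (((measurable_const.mul measurable_id).add
      measurable_const).pow measurable_const)
  · intro x hx
    apply ENNReal.ofReal_le_ofReal
    have h0 : 0 < s.qa * x + s.qb := h.den_pos (hB hx).1
    have h1 : s.qa * x + s.qb ≤ s.qa + s.qb := h.den_le (hB hx).1 (hB hx).2
    rw [abs_div, h.abs_det, abs_of_pos (by positivity : (0:ℝ) < (s.qa * x + s.qb) ^ 2)]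
    apply one_div_le_one_div_of_le (by positivity)
    nlinarith

/-- the interval hull of the image of `[0,1]`. -/
def J (s : CF) : Set ℝ := Icc (min (s.f 0) (s.f 1)) (max (s.f 0) (s.f 1))

theorem Inv.f_one_sub_f_zero {s : CF} (h : Inv s) :
    s.f 1 - s.f 0 = s.det / ((s.qa + s.qb) * s.qb) := by
  have h1 : s.qa * (1:ℝ) + s.qb ≠ 0 := (h.den_pos zero_le_one).ne'
  have h0 : s.qa * (0:ℝ) + s.qb ≠ 0 := (h.den_pos le_rfl).ne'
  have := s.f_sub h1 h0
  simp only [mul_one, mul_zero, zero_add, sub_zero] at this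
  rw [this]

theorem Inv.abs_f_one_sub_f_zero {s : CF} (h : Inv s) :
    |s.f 1 - s.f 0| = 1 / (s.qb * (s.qa + s.qb)) := by
  have hq : 0 < (s.qa + s.qb) * s.qb := by nlinarith [h.qa_nonneg, h.one_le_qb]
  rw [h.f_one_sub_f_zero, abs_div, h.abs_det, abs_of_pos hq, mul_comm]

theorem Inv.mem_J {s : CF} (h : Inv s) {y : ℝ} (hy0 : 0 ≤ y) (hy1 : y ≤ 1) :
    s.f y ∈ s.J := by
  have h0 : s.qa * (0:ℝ) + s.qb ≠ 0 := (h.den_pos le_rfl).ne'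
  have h1 : s.qa * (1:ℝ) + s.qb ≠ 0 := (h.den_pos zero_le_one).ne'
  have hy : s.qa * y + s.qb ≠ 0 := (h.den_pos hy0).ne'
  have e0 := s.f_sub hy h0
  have e1 := s.f_sub h1 hy
  have hd0 : 0 < (s.qa * y + s.qb) * (s.qa * 0 + s.qb) :=
    mul_pos (h.den_pos hy0) (h.den_pos le_rfl)
  have hd1 : 0 < (s.qa * 1 + s.qb) * (s.qa * y + s.qb) :=
    mul_pos (h.den_pos zero_le_one) (h.den_pos hy0)
  rcases h.det_eq with hdet | hdet
  · have g0 : s.f y - s.f 0 ≥ 0 := by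
      rw [e0, hdet]
      apply div_nonneg _ hd0.le
      nlinarith
    have g1 : s.f 1 - s.f y ≥ 0 := by
      rw [e1, hdet]
      apply div_nonneg _ hd1.le
      nlinarith
    constructor
    · exact le_trans (min_le_left _ _) (by linarith)
    · exact le_trans (by linarith) (le_max_right _ _)
  · have g0 : s.f y - s.f 0 ≤ 0 := by
      rw [e0, hdet]
      apply div_nonpos_of_nonpos_of_nonneg _ hd0.le
      nlinarith
    have g1 : s.f 1 - s.f y ≤ 0 := by
      rw [e1, hdet]
      apply div_nonpos_of_nonpos_of_nonneg _ hd1.le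
      nlinarith
    constructor
    · exact le_trans (min_le_right _ _) (by linarith)
    · exact le_trans (by linarith) (le_max_left _ _)

theorem Inv.volume_J {s : CF} (h : Inv s) :
    volume s.J = ENNReal.ofReal (1 / (s.qb * (s.qa + s.qb))) := by
  rw [J, Real.volume_Icc, max_sub_min_eq_abs, h.abs_f_one_sub_f_zero]

theorem Inv.J_subset_ball {s : CF} (h : Inv s) {x : ℝ} (hx : x ∈ s.J) :
    s.J ⊆ Metric.closedBall x (1 / (s.qb * (s.qa + s.qb))) := by
  intro z hz
  have hM : s.f 0 ⊔ s.f 1 - s.f 0 ⊓ s.f 1 = |s.f 1 - s.f 0| := max_sub_min_eq_abs _ _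
  rw [Metric.mem_closedBall, Real.dist_eq, ← h.abs_f_one_sub_f_zero, ← hM]
  obtain ⟨hz1, hz2⟩ := hz
  obtain ⟨hx1, hx2⟩ := hx
  rw [abs_le]
  constructor <;> simp only [min_def, max_def] at * <;> split_ifs at * <;> linarith

theorem f_step (s : CF) {α z : ℝ} (hz : 0 < z) (hα : 1 ≤ α)
    (hqa : 0 ≤ s.qa) (hqb : 1 ≤ s.qb) :
    (s.step α).f z = s.f (1 / (α + z)) := by
  have h1 : (0:ℝ) < α + z := by linarith
  have h2 : s.qa * (1 / (α + z)) + s.qb ≠ 0 := by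
    have : s.qa * (1 / (α + z)) + s.qb = (s.qa + s.qb * (α + z)) / (α + z) := by
      field_simp
    rw [this]
    have : 0 < s.qa + s.qb * (α + z) := by nlinarith
    positivity
  have h3 : s.qb * z + (s.qb * α + s.qa) ≠ 0 := by nlinarith
  simp only [CF.f, CF.step]
  rw [div_eq_div_iff h3 (by exact h2)]
  field_simp
  ring

end CF

/-- The sequence of Möbius states determined by a digit sequence. -/
noncomputable def states (α : ℕ → ℝ) : ℕ → CF
  | 0 => ⟨1, 0, 0, 1⟩
  | n + 1 => (states α n).step (α n)

variable {α : ℕ → ℝ}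

theorem states_qa_nonneg (hα : ∀ n, 1 ≤ α n) : ∀ n, 0 ≤ (states α n).qa ∧ 1 ≤ (states α n).qb
  | 0 => by simp [states]
  | n + 1 => by
    obtain ⟨h1, h2⟩ := states_qa_nonneg hα n
    simp only [states, CF.step]
    constructor
    · linarith
    · nlinarith [hα n]

theorem states_inv (hα : ∀ n, 1 ≤ α n) : ∀ n, (states α (n + 1)).Inv
  | 0 => by
    have h := hα 0
    have e : states α 1 = ⟨0, 1, 1, α 0⟩ := by
      show CF.step _ _ = _
      simp only [CF.step, states]
      norm_num
    rw [e]
    exact ⟨le_rfl, zero_le_one, zero_le_one, h, zero_le_one, h, h,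
      Or.inr (by simp [CF.det])⟩
  | n + 1 => (states_inv hα n).step (hα (n + 1))

theorem states_growth (hα : ∀ n, 1 ≤ α n) :
    ∀ n, ((3:ℝ)/2) ^ (n+1) ≤ (states α (n+1)).qa + (states α (n+1)).qb
  | 0 => by
    have := hα 0
    simp only [states, CF.step]
    norm_num
    linarith
  | n + 1 => by
    have IH := states_growth hα n
    have inv := states_inv hα n
    have h1 := inv.qa_nonneg
    have h2 := inv.qa_le
    have h3 := inv.one_le_qb
    have h4 := hα (n+1)
    have e : states α (n+2) = (states α (n+1)).step (α (n+1)) := rfl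
    rw [e]
    simp only [CF.step]
    calc ((3:ℝ)/2) ^ (n+2) = (3/2) * (3/2)^(n+1) := by ring
    _ ≤ (3/2) * ((states α (n+1)).qa + (states α (n+1)).qb) := by nlinarith
    _ ≤ _ := by nlinarith

/-- applying the gauss map `n` times to `(states α n).f b` recovers `b`. -/
theorem iterate_states (a : ℕ → ℤ) (ha : ∀ n, 1 ≤ a n) :
    ∀ n, ∀ b ∈ Ioo (0:ℝ) 1, gaussMap^[n] ((states (fun k => ((a k : ℤ) : ℝ)) n).f b) = b := by
  intro n
  induction n with
  | zero => intro b _; simp [states, CF.f]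
  | succ n IH =>
    intro b hb
    set α : ℕ → ℝ := fun k => ((a k : ℤ) : ℝ) with hαdef
    have hα : ∀ k, 1 ≤ α k := fun k => by
      show (1:ℝ) ≤ ((a k : ℤ) : ℝ); exact_mod_cast ha k
    have hc1 : (0:ℝ) < α n + b := by have := hα n; linarith [hb.1]
    have hc : 1 / (α n + b) ∈ Ioo (0:ℝ) 1 := by
      constructor
      · positivity
      · rw [div_lt_one hc1]
        have := hα n
        linarith [hb.1]
    have key : (states α (n+1)).f b = (states α n).f (1 / (α n + b)) := by
      show ((states α n).step (α n)).f b = _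
      exact (states α n).f_step hb.1 (hα n) (states_qa_nonneg hα n).1 (states_qa_nonneg hα n).2
    rw [key, Function.iterate_succ_apply', IH _ hc]
    have hcne : 1 / (α n + b) ≠ 0 := ne_of_gt hc.1
    rw [gaussMap, if_neg hcne, one_div_one_div]
    have : Int.fract (α n + b) = b := by
      rw [hαdef]
      rw [Int.fract_intCast_add]
      exact Int.fract_eq_self.2 ⟨hb.1.le, hb.2⟩
    exact this

/-- The gauss map sends irrationals of `(0,1)` to irrationals of `(0,1)`. -/
theorem gaussMap_irrational {y : ℝ} (hy : y ∈ Ioo (0:ℝ) 1) (hirr : Irrational y) :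
    gaussMap y ∈ Ioo (0:ℝ) 1 ∧ Irrational (gaussMap y) := by
  have hy0 : y ≠ 0 := ne_of_gt hy.1
  have h1 : Irrational (1/y) := by rw [one_div]; exact hirr.inv
  have hfr : Irrational (Int.fract (1/y)) := by
    rw [Int.fract]; exact Irrational.sub_intCast h1 _
  have hG : gaussMap y = Int.fract (1/y) := if_neg hy0
  have hne : Int.fract (1/y) ≠ 0 := by
    intro h0
    rw [h0] at hfr
    exact (Rat.not_irrational 0) (by simpa using hfr)
  refine ⟨⟨?_, ?_⟩, by rwa [hG]⟩
  · rw [hG]; exact (Int.fract_nonneg _).lt_of_ne (Ne.symm hne)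
  · rw [hG]; exact Int.fract_lt_one _

theorem gaussMap_orbit {x : ℝ} (hx : x ∈ Ioo (0:ℝ) 1) (hirr : Irrational x) :
    ∀ n, gaussMap^[n] x ∈ Ioo (0:ℝ) 1 ∧ Irrational (gaussMap^[n] x)
  | 0 => ⟨hx, hirr⟩
  | n + 1 => by
    obtain ⟨h1, h2⟩ := gaussMap_orbit hx hirr n
    rw [Function.iterate_succ_apply']
    exact gaussMap_irrational h1 h2

/-- `x` is recovered from its digits. -/
theorem x_eq_states (x : ℝ) (hx : x ∈ Ioo (0:ℝ) 1) (hirr : Irrational x) :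
    ∀ n, x = (states (fun k => ((⌊1 / gaussMap^[k] x⌋ : ℤ) : ℝ)) n).f (gaussMap^[n] x) := by
  set α : ℕ → ℝ := fun k => ((⌊1 / gaussMap^[k] x⌋ : ℤ) : ℝ) with hαdef
  have horb := gaussMap_orbit hx hirr
  have hα : ∀ k, 1 ≤ α k := by
    intro k
    rw [hαdef]
    have h1 : 1 < 1 / gaussMap^[k] x := one_lt_one_div (horb k).1.1 (horb k).1.2
    have h2 : (1:ℤ) ≤ ⌊1 / gaussMap^[k] x⌋ := Int.le_floor.2 (by exact_mod_cast h1.le)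
    show (1:ℝ) ≤ ((⌊1 / gaussMap^[k] x⌋ : ℤ) : ℝ)
    exact_mod_cast h2
  intro n
  induction n with
  | zero => simp [states, CF.f]
  | succ n IH =>
    have hyn := (horb n).1
    have hrec : gaussMap^[n] x = 1 / (α n + gaussMap^[n+1] x) := by
      rw [Function.iterate_succ_apply', gaussMap, if_neg (ne_of_gt hyn.1), hαdef]
      rw [Int.fract]
      have : (⌊1 / gaussMap^[n] x⌋ : ℝ) + (1 / gaussMap^[n] x - ⌊1 / gaussMap^[n] x⌋)
          = 1 / gaussMap^[n] x := by ring
      rw [this, one_div_one_div]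
    have key : (states α (n+1)).f (gaussMap^[n+1] x)
        = (states α n).f (1 / (α n + gaussMap^[n+1] x)) := by
      show ((states α n).step (α n)).f _ = _
      exact (states α n).f_step (horb (n+1)).1.1 (hα n)
        (states_qa_nonneg hα n).1 (states_qa_nonneg hα n).2
    rw [key, ← hrec]
    exact IH

/-- The core ergodicity argument: an invariant-mod-null subset of `[0,1]` with positive
Lebesgue measure has full Lebesgue measure in `[0,1]`. -/
theorem core (A : Set ℝ) (hAm : MeasurableSet A) (hA : A ⊆ Icc (0:ℝ) 1)
    (hinv : ∀ n, volume (((gaussMap^[n] ⁻¹' A) ∆ A) ∩ Icc (0:ℝ) 1) = 0)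
    (hA0 : volume A ≠ 0) : volume (Icc (0:ℝ) 1 \ A) = 0 := by
  by_contra hB0
  set B : Set ℝ := Icc (0:ℝ) 1 \ A with hBdef
  have hBm : MeasurableSet B := measurableSet_Icc.diff hAm
  -- pick a suitable density point of B
  have hres : volume.restrict B ≠ 0 := by
    intro h
    apply hB0
    rw [← Measure.restrict_apply_univ]
    simp [h]
  haveI : (ae (volume.restrict B)).NeBot := ae_neBot.2 hres
  have hirr_ae : ∀ᵐ x ∂volume.restrict B, Irrational x := by
    have hcount : volume {x : ℝ | ¬ Irrational x} = 0 := by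
      have : {x : ℝ | ¬ Irrational x} = Set.range ((↑) : ℚ → ℝ) := by
        ext x; simp [Irrational]
      rw [this]
      exact (Set.countable_range _).measure_zero _
    have := Measure.absolutelyContinuous_of_le (Measure.restrict_le_self (μ := volume)
      (s := B))
    exact this hcount
  have hdens := IsUnifLocDoublingMeasure.ae_tendsto_measure_inter_div
    (volume : Measure ℝ) B 1
  obtain ⟨x, hxdens, hxirr, hxB⟩ := (hdens.and (hirr_ae.and
    (ae_restrict_mem hBm))).exists
  have hx01 : x ∈ Ioo (0:ℝ) 1 := by
    rcases hxB.1 with ⟨h0, h1⟩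
    have hx0 : x ≠ 0 := by simpa using hxirr.ne_int 0
    have hx1 : x ≠ 1 := by simpa using hxirr.ne_int 1
    exact ⟨lt_of_le_of_ne h0 (Ne.symm hx0), lt_of_le_of_ne h1 hx1⟩
  -- digits and states
  set α : ℕ → ℝ := fun k => ((⌊1 / gaussMap^[k] x⌋ : ℤ) : ℝ) with hαdef
  have horb := gaussMap_orbit hx01 hxirr
  have hα : ∀ k, 1 ≤ α k := by
    intro k
    have h1 : 1 < 1 / gaussMap^[k] x := one_lt_one_div (horb k).1.1 (horb k).1.2
    have h2 : (1:ℤ) ≤ ⌊1 / gaussMap^[k] x⌋ := Int.le_floor.2 (by exact_mod_cast h1.le)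
    show (1:ℝ) ≤ ((⌊1 / gaussMap^[k] x⌋ : ℤ) : ℝ)
    exact_mod_cast h2
  set S : ℕ → CF := fun n => states α (n+1) with hSdef
  have hSinv : ∀ n, (S n).Inv := fun n => states_inv hα n
  set δ : ℕ → ℝ := fun n => 1 / ((S n).qb * ((S n).qa + (S n).qb)) with hδdef
  have hqq : ∀ n, 0 < (S n).qb * ((S n).qa + (S n).qb) := by
    intro n
    have h1 := (hSinv n).qa_nonneg
    have h2 := (hSinv n).one_le_qb
    nlinarith
  have hδpos : ∀ n, 0 < δ n := fun n => by
    rw [hδdef]; exact one_div_pos.2 (hqq n)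
  have hδle : ∀ n, δ n ≤ (2/3 : ℝ) ^ (n+1) := by
    intro n
    have hg := states_growth hα n
    have h1 := (hSinv n).qa_nonneg
    have h2 := (hSinv n).one_le_qb
    have h3 : (0:ℝ) < (3/2 : ℝ) ^ (n+1) := by positivity
    rw [hδdef]
    have e : (2/3 : ℝ) ^ (n+1) = 1 / ((3/2 : ℝ) ^ (n+1)) := by
      rw [one_div, ← inv_pow]
      norm_num
    rw [e]
    apply one_div_le_one_div_of_le h3
    calc ((3:ℝ)/2) ^ (n+1) ≤ (S n).qa + (S n).qb := hg
    _ ≤ (S n).qb * ((S n).qa + (S n).qb) := by nlinarith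
  have hδlim : Tendsto δ atTop (𝓝[>] (0:ℝ)) := by
    apply tendsto_nhdsWithin_of_tendsto_nhds_of_eventually_within
    · apply squeeze_zero (fun n => (hδpos n).le) hδle
      have : Tendsto (fun n : ℕ => (2/3 : ℝ) ^ (n+1)) atTop (𝓝 0) := by
        have h := tendsto_pow_atTop_nhds_zero_of_lt_one (by norm_num : (0:ℝ) ≤ 2/3)
          (by norm_num : (2/3 : ℝ) < 1)
        exact h.comp (tendsto_add_atTop_nat 1)
      exact this
    · exact Eventually.of_forall (fun n => mem_Ioi.2 (hδpos n))
  have hmem : ∀ᶠ n in atTop, x ∈ Metric.closedBall x (1 * δ n) :=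
    Eventually.of_forall (fun n => Metric.mem_closedBall_self (by nlinarith [hδpos n]))
  have htT : Tendsto
      (fun n => volume (B ∩ Metric.closedBall x (δ n)) / volume (Metric.closedBall x (δ n)))
      atTop (𝓝 1) := hxdens (fun _ => x) δ hδlim hmem
  set t : ℕ → ℝ := fun n =>
    (volume (B ∩ Metric.closedBall x (δ n)) / volume (Metric.closedBall x (δ n))).toReal
    with htdef
  have htlim : Tendsto t atTop (𝓝 1) := by
    have h := (ENNReal.tendsto_toReal (by norm_num : (1:ℝ≥0∞) ≠ ⊤)).comp htT
    simp only [ENNReal.toReal_one] at h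
    exact h
  -- basic measure facts
  have hAfin : volume A ≠ ⊤ := by
    have : volume A ≤ volume (Icc (0:ℝ) 1) := measure_mono hA
    rw [Real.volume_Icc] at this
    exact ne_top_of_le_ne_top (by norm_num) this
  set aR : ℝ := (volume A).toReal with haRdef
  have haRpos : 0 < aR := ENNReal.toReal_pos hA0 hAfin
  have hA' : volume (A ∩ Ioo (0:ℝ) 1) = volume A := by
    apply le_antisymm (measure_mono inter_subset_left)
    have hsub : A ⊆ (A ∩ Ioo (0:ℝ) 1) ∪ ({0} ∪ {1} : Set ℝ) := by
      intro z hz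
      rcases hA hz with ⟨h0, h1⟩
      rcases h0.lt_or_eq with h | h
      · rcases h1.lt_or_eq with h' | h'
        · exact Or.inl ⟨hz, h, h'⟩
        · exact Or.inr (Or.inr (by simp [h']))
      · exact Or.inr (Or.inl (by simp [← h]))
    calc volume A ≤ volume ((A ∩ Ioo (0:ℝ) 1) ∪ ({0} ∪ {1} : Set ℝ)) := measure_mono hsub
    _ ≤ volume (A ∩ Ioo (0:ℝ) 1) + volume ({0} ∪ {1} : Set ℝ) := measure_union_le _ _
    _ ≤ volume (A ∩ Ioo (0:ℝ) 1) + (volume ({0} : Set ℝ) + volume ({1} : Set ℝ)) := by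
        gcongr; exact measure_union_le _ _
    _ = volume (A ∩ Ioo (0:ℝ) 1) := by simp
  -- the key inequality for each n
  have hkey : ∀ n, aR ≤ 4 * (1 - t n) := by
    intro n
    have inv := hSinv n
    have hqa := inv.qa_nonneg
    have hqb := inv.one_le_qb
    have hqaqb := inv.qa_le
    set D : ℝ := (S n).qa + (S n).qb with hDdef
    have hD1 : (1:ℝ) ≤ D := by rw [hDdef]; linarith
    have hDpos : (0:ℝ) < D := by linarith
    -- x is in the fundamental interval J
    have hxJ : x ∈ (S n).J := by
      have hx_eq := x_eq_states x hx01 hxirr (n+1)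
      have hy := (horb (n+1)).1
      rw [hSdef]
      rw [hx_eq]
      exact inv.mem_J hy.1.le hy.2.le
    have hJball : (S n).J ⊆ Metric.closedBall x (δ n) := by
      rw [hδdef]
      exact inv.J_subset_ball hxJ
    set cb : Set ℝ := Metric.closedBall x (δ n) with hcbdef
    -- lower bound for volume (A ∩ J)
    have himg1 : (S n).f '' (A ∩ Ioo (0:ℝ) 1) ⊆ A ∪ (((gaussMap^[n+1] ⁻¹' A) ∆ A) ∩ Icc 0 1) := by
      rintro z ⟨b, hb, rfl⟩
      have hfb : (S n).f b ∈ Icc (0:ℝ) 1 := inv.mem_Icc hb.2.1.le hb.2.2.le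
      have hit : gaussMap^[n+1] ((S n).f b) = b := by
        have := iterate_states (fun k => ⌊1 / gaussMap^[k] x⌋)
          (fun k => by exact_mod_cast Int.le_floor.2 (by
            exact_mod_cast (one_lt_one_div (horb k).1.1 (horb k).1.2).le)) (n+1) b hb.2
        exact this
      have hpre : (S n).f b ∈ gaussMap^[n+1] ⁻¹' A := by
        rw [mem_preimage, hit]; exact hb.1
      by_cases hzA : (S n).f b ∈ A
      · exact Or.inl hzA
      · exact Or.inr ⟨Or.inl ⟨hpre, hzA⟩, hfb⟩
    have himg2 : (S n).f '' (A ∩ Ioo (0:ℝ) 1) ⊆ (S n).J := by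
      rintro z ⟨b, hb, rfl⟩
      exact inv.mem_J hb.2.1.le hb.2.2.le
    have himg : (S n).f '' (A ∩ Ioo (0:ℝ) 1)
        ⊆ (A ∩ (S n).J) ∪ (((gaussMap^[n+1] ⁻¹' A) ∆ A) ∩ Icc 0 1) := by
      intro z hz
      rcases himg1 hz with h | h
      · exact Or.inl ⟨h, himg2 hz⟩
      · exact Or.inr h
    have hlow : ENNReal.ofReal (1 / D ^ 2) * volume A ≤ volume (A ∩ (S n).J) := by
      calc ENNReal.ofReal (1 / D ^ 2) * volume A
          = ENNReal.ofReal (1 / ((S n).qa + (S n).qb) ^ 2) * volume (A ∩ Ioo (0:ℝ) 1) := by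
            rw [hA', hDdef]
      _ ≤ volume ((S n).f '' (A ∩ Ioo (0:ℝ) 1)) :=
            inv.le_volume_image (hAm.inter measurableSet_Ioo)
              (fun z hz => ⟨hz.2.1.le, hz.2.2.le⟩)
      _ ≤ volume ((A ∩ (S n).J) ∪ (((gaussMap^[n+1] ⁻¹' A) ∆ A) ∩ Icc 0 1)) :=
            measure_mono himg
      _ ≤ volume (A ∩ (S n).J) + volume ((((gaussMap^[n+1] ⁻¹' A) ∆ A) ∩ Icc 0 1)) :=
            measure_union_le _ _
      _ = volume (A ∩ (S n).J) := by rw [hinv (n+1), add_zero]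
    -- upper bound: A ∩ J and B ∩ cb are disjoint subsets of cb
    have hdisj : Disjoint (A ∩ (S n).J) (B ∩ cb) := by
      apply Set.disjoint_left.2
      rintro z ⟨hzA, _⟩ ⟨hzB, _⟩
      exact hzB.2 hzA
    have hup : volume (A ∩ (S n).J) + volume (B ∩ cb) ≤ volume cb := by
      rw [← measure_union hdisj (hBm.inter measurableSet_closedBall)]
      apply measure_mono
      apply union_subset
      · exact (inter_subset_right).trans hJball
      · exact inter_subset_right
    -- convert to real numbers
    have hcbvol : volume cb = ENNReal.ofReal (2 * δ n) := by
      rw [hcbdef, Real.volume_closedBall]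
    have hcbfin : volume cb ≠ ⊤ := by rw [hcbvol]; exact ENNReal.ofReal_ne_top
    have hAJfin : volume (A ∩ (S n).J) ≠ ⊤ := by
      apply ne_top_of_le_ne_top hcbfin
      exact measure_mono ((inter_subset_right).trans hJball)
    have hBcbfin : volume (B ∩ cb) ≠ ⊤ :=
      ne_top_of_le_ne_top hcbfin (measure_mono inter_subset_right)
    have hlowR : (1 / D ^ 2) * aR ≤ (volume (A ∩ (S n).J)).toReal := by
      have := ENNReal.toReal_mono hAJfin hlow
      rwa [ENNReal.toReal_mul, ENNReal.toReal_ofReal (by positivity)] at this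
    have hupR : (volume (A ∩ (S n).J)).toReal + (volume (B ∩ cb)).toReal ≤ 2 * δ n := by
      have := ENNReal.toReal_mono hcbfin hup
      rwa [ENNReal.toReal_add hAJfin hBcbfin, hcbvol,
        ENNReal.toReal_ofReal (by nlinarith [hδpos n])] at this
    have htn : t n = (volume (B ∩ cb)).toReal / (2 * δ n) := by
      rw [htdef]
      simp only [← hcbdef]
      rw [ENNReal.toReal_div, hcbvol, ENNReal.toReal_ofReal (by nlinarith [hδpos n])]
    have hBcbR : (volume (B ∩ cb)).toReal = t n * (2 * δ n) := by
      rw [htn]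
      rw [div_mul_cancel₀ _ (by have := hδpos n; positivity : (2 * δ n) ≠ 0)]
    have ht1 : t n ≤ 1 := by
      rw [htn, div_le_one (by nlinarith [hδpos n])]
      nlinarith [ENNReal.toReal_nonneg (a := volume (A ∩ (S n).J)), hupR]
    -- algebra
    have hδval : δ n * ((S n).qb * D) = 1 := by
      rw [hδdef, hDdef]
      field_simp
    have hstep : (1 / D ^ 2) * aR ≤ 2 * δ n * (1 - t n) := by
      nlinarith [hlowR, hupR, hBcbR]
    have hfinal : aR ≤ 2 * δ n * (1 - t n) * D ^ 2 := by
      have h1 : (1 / D ^ 2) * aR * D ^ 2 = aR := by field_simp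
      have h2 := mul_le_mul_of_nonneg_right hstep (by positivity : (0:ℝ) ≤ D ^ 2)
      rwa [h1] at h2
    have hδD2 : δ n * D ^ 2 ≤ 2 := by
      have hD2qb : D ≤ 2 * (S n).qb := by rw [hDdef]; linarith
      nlinarith [hδpos n, hδval, hDpos]
    calc aR ≤ 2 * δ n * (1 - t n) * D ^ 2 := hfinal
    _ = 2 * (1 - t n) * (δ n * D ^ 2) := by ring
    _ ≤ 2 * (1 - t n) * 2 := mul_le_mul_of_nonneg_left hδD2 (by linarith)
    _ = 4 * (1 - t n) := by ring
  -- take the limit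
  have hlim0 : Tendsto (fun n => 4 * (1 - t n)) atTop (𝓝 0) := by
    have : Tendsto (fun n => 4 * (1 - t n)) atTop (𝓝 (4 * (1 - 1))) :=
      (tendsto_const_nhds.sub htlim).const_mul 4
    simpa using this
  have : aR ≤ 0 := ge_of_tendsto' hlim0 hkey
  linarith



theorem log2_pos : 0 < Real.log 2 := Real.log_pos one_lt_two

theorem measurable_gaussMap : Measurable gaussMap := by
  unfold gaussMap
  refine Measurable.ite measurableSet_eq measurable_const ?_
  exact measurable_fract.comp (measurable_const.div measurable_id)

theorem gaussMap_nonneg (x : ℝ) : 0 ≤ gaussMap x := by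
  unfold gaussMap
  split_ifs
  · exact le_refl 0
  · exact Int.fract_nonneg _

theorem gaussMap_lt_one (x : ℝ) : gaussMap x < 1 := by
  unfold gaussMap
  split_ifs
  · norm_num
  · exact Int.fract_lt_one _

theorem gaussMeasure_apply {S : Set ℝ} (hS : MeasurableSet S) :
    gaussMeasure S = ∫⁻ x in S ∩ Icc (0:ℝ) 1, ENNReal.ofReal (1 / ((1 + x) * Real.log 2)) := by
  rw [gaussMeasure, withDensity_apply _ hS, Measure.restrict_restrict hS]

theorem lint_Icc {c d : ℝ} (h0 : 0 ≤ c) (hcd : c ≤ d) (hd1 : d ≤ 1) :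
    ∫⁻ x in Icc c d, ENNReal.ofReal (1 / ((1 + x) * Real.log 2))
      = ENNReal.ofReal (Real.log ((1 + d) / (1 + c)) / Real.log 2) := by
  have hcont : ContinuousOn (fun x : ℝ => 1 / ((1 + x) * Real.log 2)) (Icc c d) := by
    apply ContinuousOn.div continuousOn_const
    · exact (continuousOn_const.add continuousOn_id).mul continuousOn_const
    · intro x hx
      have : (0:ℝ) < 1 + x := by linarith [hx.1]
      positivity
  have hint : IntegrableOn (fun x : ℝ => 1 / ((1 + x) * Real.log 2)) (Icc c d) volume :=
    hcont.integrableOn_compact isCompact_Icc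
  rw [← ofReal_integral_eq_lintegral_ofReal hint]
  · congr 1
    rw [MeasureTheory.integral_Icc_eq_integral_Ioc, ← intervalIntegral.integral_of_le hcd]
    have e1 : ∀ x : ℝ, 1 / ((1 + x) * Real.log 2) = (Real.log 2)⁻¹ * (1 + x)⁻¹ := by
      intro x; rw [one_div, mul_inv, mul_comm]
    simp only [e1]
    rw [intervalIntegral.integral_const_mul]
    have e2 : ∀ x ∈ Set.uIcc c d, (1 + x)⁻¹ = (fun u : ℝ => u⁻¹) (1 + x) := fun _ _ => rfl
    rw [intervalIntegral.integral_comp_add_left (fun u : ℝ => u⁻¹) 1]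
    rw [integral_inv_of_pos (by linarith) (by linarith)]
    rw [show ((1:ℝ)+d)/(1+c) = (1+c)⁻¹*(1+d) from by rw [div_eq_mul_inv]; ring,
      div_eq_inv_mul]
  · filter_upwards [ae_restrict_mem measurableSet_Icc] with x hx
    have : (0:ℝ) < 1 + x := by linarith [hx.1]
    positivity

theorem gm_Icc {c d : ℝ} (h0 : 0 ≤ c) (hcd : c ≤ d) (hd1 : d ≤ 1) :
    gaussMeasure (Icc c d) = ENNReal.ofReal (Real.log ((1 + d) / (1 + c)) / Real.log 2) := by
  rw [gaussMeasure_apply measurableSet_Icc, inter_eq_left.2 ?_, lint_Icc h0 hcd hd1]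
  exact fun x hx => ⟨le_trans h0 hx.1, le_trans hx.2 hd1⟩

theorem gm_Icc01 : gaussMeasure (Icc (0:ℝ) 1) = 1 := by
  rw [gm_Icc le_rfl zero_le_one le_rfl]
  norm_num [div_self log2_pos.ne']

theorem gm_univ : gaussMeasure univ = 1 := by
  rw [gaussMeasure_apply MeasurableSet.univ, univ_inter, lint_Icc le_rfl zero_le_one le_rfl]
  norm_num [div_self log2_pos.ne']

instance : IsProbabilityMeasure gaussMeasure := ⟨gm_univ⟩

theorem gm_null_outside {S : Set ℝ} (hS : MeasurableSet S) :
    gaussMeasure S = gaussMeasure (S ∩ Icc (0:ℝ) 1) := by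
  rw [gaussMeasure_apply hS, gaussMeasure_apply (hS.inter measurableSet_Icc),
    inter_assoc, inter_self]

theorem gm_null_of_volume_null {S : Set ℝ} (hS : MeasurableSet S)
    (h : volume (S ∩ Icc (0:ℝ) 1) = 0) : gaussMeasure S = 0 := by
  rw [gaussMeasure_apply hS]
  exact setLIntegral_measure_zero _ _ h

theorem preimage_Iic_inter {a : ℝ} (ha0 : 0 ≤ a) (ha1 : a < 1) :
    gaussMap ⁻¹' (Iic a) ∩ Icc (0:ℝ) 1
      = {0} ∪ ⋃ n : ℕ, Icc (1/((n:ℝ)+1+a)) (1/((n:ℝ)+1)) := by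
  ext x
  simp only [mem_inter_iff, mem_preimage, mem_Iic, mem_Icc, mem_union, mem_singleton_iff,
    mem_iUnion]
  constructor
  · rintro ⟨hGa, hx0, hx1⟩
    by_cases hx : x = 0
    · exact Or.inl hx
    · right
      have hxpos : 0 < x := lt_of_le_of_ne hx0 (Ne.symm hx)
      have hz1 : 1 ≤ 1/x := by rw [le_div_iff₀ hxpos]; linarith
      have hfl1 : (1:ℤ) ≤ ⌊1/x⌋ := Int.le_floor.2 (by exact_mod_cast hz1)
      refine ⟨(⌊1/x⌋ - 1).toNat, ?_, ?_⟩
      · have hcast : (((⌊1/x⌋ - 1).toNat : ℕ) : ℝ) + 1 = ((⌊1/x⌋ : ℤ) : ℝ) := by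
          have h' : ((⌊1/x⌋ - 1).toNat : ℤ) = ⌊1/x⌋ - 1 := Int.toNat_of_nonneg (by omega)
          have := congrArg (fun z : ℤ => (z : ℝ)) h'
          push_cast at this
          linarith
        rw [hcast]
        have hfr : gaussMap x = 1/x - ((⌊1/x⌋ : ℤ) : ℝ) := by
          rw [gaussMap, if_neg hx, Int.fract]
        have h1 : 1/x ≤ ((⌊1/x⌋ : ℤ) : ℝ) + a := by
          rw [hfr] at hGa; linarith
        have h2 : (0:ℝ) < 1/x := by positivity
        calc 1/(((⌊1/x⌋ : ℤ) : ℝ) + a) ≤ 1/(1/x) := one_div_le_one_div_of_le h2 h1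
        _ = x := one_div_one_div x
      · have hcast : (((⌊1/x⌋ - 1).toNat : ℕ) : ℝ) + 1 = ((⌊1/x⌋ : ℤ) : ℝ) := by
          have h' : ((⌊1/x⌋ - 1).toNat : ℤ) = ⌊1/x⌋ - 1 := Int.toNat_of_nonneg (by omega)
          have := congrArg (fun z : ℤ => (z : ℝ)) h'
          push_cast at this
          linarith
        rw [hcast]
        have hflpos : (0:ℝ) < ((⌊1/x⌋ : ℤ) : ℝ) := by exact_mod_cast lt_of_lt_of_le zero_lt_one hfl1
        calc x = 1/(1/x) := (one_div_one_div x).symm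
        _ ≤ 1/((⌊1/x⌋ : ℤ) : ℝ) := one_div_le_one_div_of_le hflpos (Int.floor_le _)
  · rintro (rfl | ⟨n, hl, hu⟩)
    · refine ⟨?_, le_rfl, zero_le_one⟩
      rw [gaussMap, if_pos rfl]
      exact ha0
    · have hN1 : (0:ℝ) < (n:ℝ) + 1 := by positivity
      have hNa : (0:ℝ) < (n:ℝ) + 1 + a := by linarith
      have hxpos : 0 < x := lt_of_lt_of_le (by positivity) hl
      have hx1 : x ≤ 1 := hu.trans (by rw [div_le_one hN1]; linarith)
      have hz_lb : (n:ℝ) + 1 ≤ 1/x := by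
        rw [le_div_iff₀ hxpos]
        calc ((n:ℝ)+1) * x ≤ ((n:ℝ)+1) * (1/((n:ℝ)+1)) := by
              apply mul_le_mul_of_nonneg_left hu hN1.le
        _ = 1 := by field_simp
      have hz_ub : 1/x ≤ (n:ℝ) + 1 + a := by
        rw [div_le_iff₀ hxpos]
        calc (1:ℝ) = ((n:ℝ)+1+a) * (1/((n:ℝ)+1+a)) := by field_simp
        _ ≤ ((n:ℝ)+1+a) * x := by apply mul_le_mul_of_nonneg_left hl hNa.le
      have hfl : ⌊1/x⌋ = (n:ℤ) + 1 := by
        apply Int.floor_eq_iff.2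
        constructor
        · push_cast; linarith
        · push_cast; linarith
      refine ⟨?_, hxpos.le, hx1⟩
      rw [gaussMap, if_neg hxpos.ne', Int.fract, hfl]
      push_cast
      linarith

theorem gm_map_Iic (a : ℝ) : gaussMeasure (gaussMap ⁻¹' (Iic a)) = gaussMeasure (Iic a) := by
  rcases lt_or_ge a 0 with ha | ha0
  · have h1 : gaussMap ⁻¹' (Iic a) = ∅ := by
      apply eq_empty_iff_forall_notMem.2
      intro x hx
      have := gaussMap_nonneg x
      simp only [mem_preimage, mem_Iic] at hx
      linarith
    have h2 : Iic a ∩ Icc (0:ℝ) 1 = ∅ := by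
      apply eq_empty_iff_forall_notMem.2
      rintro x ⟨hx1, hx2, _⟩
      simp only [mem_Iic] at hx1
      linarith
    rw [h1, gm_null_outside measurableSet_Iic, h2]
  rcases lt_or_ge a 1 with ha1 | ha1
  · -- main case 0 ≤ a < 1
    rw [gm_null_outside (measurable_gaussMap measurableSet_Iic), preimage_Iic_inter ha0 ha1]
    have hsing : gaussMeasure ({0} : Set ℝ) = 0 := by
      apply gm_null_of_volume_null (measurableSet_singleton 0)
      apply measure_mono_null inter_subset_left
      exact measure_singleton 0
    have hU : gaussMeasure ({0} ∪ ⋃ n : ℕ, Icc (1/((n:ℝ)+1+a)) (1/((n:ℝ)+1)))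
        = gaussMeasure (⋃ n : ℕ, Icc (1/((n:ℝ)+1+a)) (1/((n:ℝ)+1))) := by
      apply le_antisymm
      · calc gaussMeasure _ ≤ gaussMeasure ({0} : Set ℝ)
              + gaussMeasure (⋃ n : ℕ, Icc (1/((n:ℝ)+1+a)) (1/((n:ℝ)+1))) := measure_union_le _ _
        _ = _ := by rw [hsing, zero_add]
      · exact measure_mono subset_union_right
    rw [hU]
    have hdisj : Pairwise (Function.onFun Disjoint
        (fun n : ℕ => Icc (1/((n:ℝ)+1+a)) (1/((n:ℝ)+1)))) := by
      have key : ∀ i j : ℕ, i < j → Disjoint (Icc (1/((i:ℝ)+1+a)) (1/((i:ℝ)+1)))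
          (Icc (1/((j:ℝ)+1+a)) (1/((j:ℝ)+1))) := by
        intro i j hij
        apply Set.disjoint_left.2
        rintro z ⟨hz1, _⟩ ⟨_, hz4⟩
        have hij' : (i:ℝ) + 1 ≤ (j:ℝ) := by exact_mod_cast Nat.succ_le_of_lt hij
        have h1 : (0:ℝ) < (j:ℝ) + 1 := by positivity
        have h2 : (0:ℝ) < (i:ℝ) + 1 + a := by linarith
        have : 1/((j:ℝ)+1) < 1/((i:ℝ)+1+a) := by
          apply one_div_lt_one_div_of_lt h2
          linarith
        linarith
      intro i j hij
      rcases lt_or_gt_of_ne hij with h | h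
      · exact key i j h
      · exact (key j i h).symm
    rw [measure_iUnion hdisj (fun n => measurableSet_Icc)]
    have hterm : ∀ n : ℕ, gaussMeasure (Icc (1/((n:ℝ)+1+a)) (1/((n:ℝ)+1)))
        = ENNReal.ofReal ((Real.log (1 + a/((n:ℝ)+1)) - Real.log (1 + a/((n:ℝ)+2)))
            / Real.log 2) := by
      intro n
      have hN1 : (0:ℝ) < (n:ℝ) + 1 := by positivity
      have hN2 : (0:ℝ) < (n:ℝ) + 2 := by positivity
      have hNa : (0:ℝ) < (n:ℝ) + 1 + a := by linarith
      have hc0 : (0:ℝ) ≤ 1/((n:ℝ)+1+a) := by positivity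
      have hcd : 1/((n:ℝ)+1+a) ≤ 1/((n:ℝ)+1) := one_div_le_one_div_of_le hN1 (by linarith)
      have hd1 : 1/((n:ℝ)+1) ≤ 1 := by rw [div_le_one hN1]; linarith
      rw [gm_Icc hc0 hcd hd1]
      congr 1
      congr 1
      have e1 : 1 + 1/((n:ℝ)+1) = ((n:ℝ)+2)/((n:ℝ)+1) := by field_simp <;> ring
      have e2 : 1 + 1/((n:ℝ)+1+a) = ((n:ℝ)+2+a)/((n:ℝ)+1+a) := by field_simp <;> ring
      have e3 : 1 + a/((n:ℝ)+1) = ((n:ℝ)+1+a)/((n:ℝ)+1) := by field_simp <;> ring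
      have e4 : 1 + a/((n:ℝ)+2) = ((n:ℝ)+2+a)/((n:ℝ)+2) := by field_simp <;> ring
      have hN2a : (0:ℝ) < (n:ℝ) + 2 + a := by linarith
      rw [e1, e2, e3, e4]
      rw [Real.log_div (by positivity) (by positivity),
        Real.log_div (by positivity) (by positivity),
        Real.log_div (by positivity) (by positivity),
        Real.log_div (by positivity) (by positivity),
        Real.log_div (by positivity) (by positivity)]
      ring
    have hIic : gaussMeasure (Iic a) = ENNReal.ofReal (Real.log (1+a) / Real.log 2) := by
      have hIcc : Iic a ∩ Icc (0:ℝ) 1 = Icc 0 a := by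
        ext x
        simp only [mem_inter_iff, mem_Iic, mem_Icc]
        constructor
        · rintro ⟨h1, h2, _⟩; exact ⟨h2, h1⟩
        · rintro ⟨h1, h2⟩; exact ⟨h2, h1, by linarith⟩
      rw [gm_null_outside measurableSet_Iic, hIcc, gm_Icc le_rfl ha0 ha1.le]
      norm_num
    rw [hIic]
    simp only [hterm]
    set g : ℕ → ℝ := fun k => Real.log (1 + a/((k:ℝ)+1)) with hgdef
    have hg1 : ∀ n : ℕ, g (n+1) = Real.log (1 + a/((n:ℝ)+2)) := by
      intro n
      rw [hgdef]
      push_cast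
      ring_nf
    have hmono : ∀ k, g (k+1) ≤ g k := by
      intro k
      rw [hg1 k, hgdef]
      have h1 : (0:ℝ) < (k:ℝ) + 1 := by positivity
      have h2 : a/((k:ℝ)+2) ≤ a/((k:ℝ)+1) := by
        apply div_le_div_of_nonneg_left ha0 h1
        linarith
      have h3 : (0:ℝ) < 1 + a/((k:ℝ)+2) := by positivity
      exact Real.log_le_log h3 (by linarith)
    have hnn : ∀ n : ℕ, 0 ≤ (g n - g (n+1))/Real.log 2 := fun n =>
      div_nonneg (by linarith [hmono n]) log2_pos.le
    have hhs : HasSum (fun n : ℕ => (g n - g (n+1))/Real.log 2)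
        (Real.log (1+a)/Real.log 2) := by
      rw [hasSum_iff_tendsto_nat_of_nonneg hnn]
      have hps : ∀ N, ∑ i ∈ Finset.range N, (g i - g (i+1))/Real.log 2
          = (g 0 - g N)/Real.log 2 := by
        intro N
        rw [← Finset.sum_div, Finset.sum_range_sub' g N]
      simp only [hps]
      have h1 : Tendsto (fun N : ℕ => a/((N:ℝ)+1)) atTop (𝓝 0) := by
        apply Tendsto.div_atTop tendsto_const_nhds
        exact tendsto_atTop_add_const_right _ 1 tendsto_natCast_atTop_atTop
      have h2 : Tendsto (fun N : ℕ => 1 + a/((N:ℝ)+1)) atTop (𝓝 1) := by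
        have := (tendsto_const_nhds (x := (1:ℝ)) (f := atTop (α := ℕ))).add h1
        simpa using this
      have hgN : Tendsto (fun N : ℕ => g N) atTop (𝓝 0) := by
        have h3 := (Real.continuousAt_log (by norm_num : (1:ℝ) ≠ 0)).tendsto.comp h2
        simpa [hgdef, Function.comp_def] using h3
      have h4 : Tendsto (fun N : ℕ => (g 0 - g N)/Real.log 2) atTop
          (𝓝 ((g 0 - 0)/Real.log 2)) := (tendsto_const_nhds.sub hgN).div_const _
      have hg0 : g 0 = Real.log (1 + a) := by rw [hgdef]; norm_num
      rw [sub_zero] at h4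
      rw [← hg0]
      exact h4
    have hrw : ∀ n : ℕ, ENNReal.ofReal ((Real.log (1 + a/((n:ℝ)+1))
        - Real.log (1 + a/((n:ℝ)+2)))/Real.log 2)
        = ENNReal.ofReal ((g n - g (n+1))/Real.log 2) := by
      intro n
      rw [hg1 n, hgdef]
    simp only [hrw]
    rw [← ENNReal.ofReal_tsum_of_nonneg hnn hhs.summable, hhs.tsum_eq]
  · -- case 1 ≤ a
    have h1 : gaussMap ⁻¹' (Iic a) = univ := by
      apply eq_univ_iff_forall.2
      intro x
      simp only [mem_preimage, mem_Iic]
      linarith [gaussMap_lt_one x]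
    have h2 : Iic a ∩ Icc (0:ℝ) 1 = Icc (0:ℝ) 1 := by
      apply inter_eq_right.2
      intro x hx
      simp only [mem_Iic]
      linarith [hx.2]
    rw [h1, gm_univ, gm_null_outside measurableSet_Iic, h2, gm_Icc01]


theorem gauss_measure_preserving : MeasurePreserving gaussMap gaussMeasure gaussMeasure := by
  refine ⟨measurable_gaussMap, ?_⟩
  haveI : IsFiniteMeasure (Measure.map gaussMap gaussMeasure) := by
    constructor
    rw [Measure.map_apply measurable_gaussMap MeasurableSet.univ, preimage_univ, gm_univ]
    exact ENNReal.one_lt_top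
  refine Measure.ext_of_Iic _ _ (fun a => ?_)
  rw [Measure.map_apply measurable_gaussMap measurableSet_Iic]
  exact gm_map_Iic a

theorem gm_null_iff {S : Set ℝ} (hS : MeasurableSet S) :
    gaussMeasure S = 0 ↔ volume (S ∩ Icc (0:ℝ) 1) = 0 := by
  constructor
  · intro h
    rw [gaussMeasure_apply hS] at h
    have hmeas : Measurable (fun x : ℝ => ENNReal.ofReal (1 / ((1 + x) * Real.log 2))) := by
      apply Measurable.ennreal_ofReal
      exact measurable_const.div ((measurable_const.add measurable_id).mul measurable_const)
    have h1 := (lintegral_eq_zero_iff hmeas).1 h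
    have h2 : ∀ᵐ x ∂(volume.restrict (S ∩ Icc (0:ℝ) 1)), x ∈ S ∩ Icc (0:ℝ) 1 :=
      ae_restrict_mem (hS.inter measurableSet_Icc)
    have h3 : ∀ᵐ x ∂(volume.restrict (S ∩ Icc (0:ℝ) 1)), False := by
      filter_upwards [h1, h2] with x hx1 hx2
      have hl2 := log2_pos
      have h4 : (0:ℝ) < 1 + x := by linarith [hx2.2.1]
      have hpos : (0:ℝ) < 1 / ((1 + x) * Real.log 2) := by positivity
      rw [Pi.zero_apply, ENNReal.ofReal_eq_zero] at hx1
      linarith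
    have h4 : (volume.restrict (S ∩ Icc (0:ℝ) 1)) univ = 0 := by
      rw [ae_iff] at h3
      simpa using h3
    rwa [Measure.restrict_apply_univ] at h4
  · intro h
    exact gm_null_of_volume_null hS h

end GaussAux

end GaussAuxSection

/-- the Gauss map preserves the Gauss measure and is ergodic with respect
to it: every Borel subset of `[0,1]` invariant up to null sets has measure `0` or `1`. -/
theorem gauss_map_measure_preserving_and_ergodic :
    MeasurePreserving gaussMap gaussMeasure gaussMeasure ∧
    (∀ A : Set ℝ, MeasurableSet A → A ⊆ Set.Icc (0:ℝ) 1 →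
      gaussMeasure ((gaussMap ⁻¹' A) ∆ A) = 0 →
      gaussMeasure A = 0 ∨ gaussMeasure A = 1) := by
  open GaussAux Set in
  refine ⟨gauss_measure_preserving, ?_⟩
  intro A hAm hA hnull
  have hiter : ∀ n, gaussMeasure ((gaussMap^[n] ⁻¹' A) ∆ A) = 0 := by
    intro n
    have h1 : gaussMeasure (A ∆ (gaussMap^[n] ⁻¹' A))
        ≤ n • gaussMeasure (A ∆ (gaussMap ⁻¹' A)) :=
      gauss_measure_preserving.measure_symmDiff_preimage_iterate_le hAm.nullMeasurableSet n
    have h2 : gaussMeasure (A ∆ (gaussMap ⁻¹' A)) = 0 := by rw [symmDiff_comm]; exact hnull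
    rw [h2, smul_zero] at h1
    have h3 : gaussMeasure (A ∆ (gaussMap^[n] ⁻¹' A)) = 0 := le_antisymm h1 (zero_le)
    rw [symmDiff_comm] at h3
    exact h3
  have hAmeas : ∀ n, MeasurableSet ((gaussMap^[n] ⁻¹' A) ∆ A) := fun n =>
    ((measurable_gaussMap.iterate n) hAm).symmDiff hAm
  have hvol : ∀ n, volume (((gaussMap^[n] ⁻¹' A) ∆ A) ∩ Icc (0:ℝ) 1) = 0 := fun n =>
    (gm_null_iff (hAmeas n)).1 (hiter n)
  by_cases h0 : volume A = 0
  · left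
    apply (gm_null_iff hAm).2
    exact measure_mono_null inter_subset_left h0
  · right
    have hBnull : volume (Icc (0:ℝ) 1 \ A) = 0 := core A hAm hA hvol h0
    have hgmB : gaussMeasure (Icc (0:ℝ) 1 \ A) = 0 :=
      (gm_null_iff (measurableSet_Icc.diff hAm)).2
        (measure_mono_null inter_subset_left hBnull)
    have hU : gaussMeasure A = gaussMeasure (A ∪ (Icc (0:ℝ) 1 \ A)) := by
      apply le_antisymm (measure_mono subset_union_left)
      calc gaussMeasure (A ∪ (Icc (0:ℝ) 1 \ A))
          ≤ gaussMeasure A + gaussMeasure (Icc (0:ℝ) 1 \ A) := measure_union_le _ _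
      _ = gaussMeasure A := by rw [hgmB, add_zero]
    rw [hU, union_diff_cancel hA, gm_Icc01]
end

section
/- (Logarithmic law of return times for Roth-type rotations) Let α ∈ ℝ be irrational and of Roth type, i.e. Diophantine of exponent ε for every ε > 0. For 0 < r < 1/2 let τ_r := min { n ≥ 1 : dist(nα, ℤ) < r } be the first return time of any point of the circle ℝ/ℤ to the ball of radius r around itself under the rotation by α. Then lim_{r→0⁺} (log τ_r)/(log(1/r)) = 1. -/
lemma aux_exists_small (α : ℝ) {r : ℝ} (hr0 : 0 < r) (hr1 : r < 1) :
    ∃ n : ℕ, (1 ≤ n ∧ |(n : ℝ) * α - (round ((n : ℝ) * α) : ℝ)| < r) ∧ (n : ℝ) ≤ 2 / r := by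
  set N := ⌈1/r⌉₊ with hN
  have hNpos : 0 < N := Nat.ceil_pos.mpr (by positivity)
  obtain ⟨j, k, hk0, hkN, hjk⟩ := Real.exists_int_int_abs_mul_sub_le α hNpos
  have hkc : ((k.toNat : ℕ) : ℝ) = (k : ℝ) := by
    exact_mod_cast congrArg (Int.cast : ℤ → ℝ) (Int.toNat_of_nonneg hk0.le)
  have hceil : (1:ℝ)/r ≤ N := Nat.le_ceil _
  have hsmall : (1:ℝ) / (N + 1) < r := by
    rw [div_lt_iff₀ (by positivity)]
    have : r * ((1:ℝ)/r) = 1 := by field_simp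
    nlinarith
  refine ⟨k.toNat, ⟨?_, ?_⟩, ?_⟩
  · omega
  · rw [hkc]
    calc |(k:ℝ) * α - (round ((k:ℝ) * α) : ℝ)| ≤ |(k:ℝ) * α - (j:ℝ)| := round_le _ j
      _ ≤ 1 / (N + 1) := hjk
      _ < r := hsmall
  · rw [hkc]
    have h1 : (k : ℝ) ≤ N := by exact_mod_cast hkN
    have h2 : (N : ℝ) < 1/r + 1 := Nat.ceil_lt_add_one (by positivity)
    have h3 : (1:ℝ) ≤ 1/r := one_le_one_div hr0 hr1.le
    have : 2/r = 1/r + 1/r := by ring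
    linarith



/-- logarithmic law of return times for Roth-type rotations: if `α` is
irrational and Diophantine of every positive exponent, and `τ_r` denotes the first time
`n ≥ 1` with `dist(nα, ℤ) < r`, then `log τ_r / log (1/r) → 1` as `r → 0⁺`. -/
theorem log_law_return_times_roth_type
    (α : ℝ) (hirr : Irrational α)
    (hroth : ∀ ε > (0:ℝ), ∃ C > (0:ℝ), ∀ p : ℤ, ∀ q : ℤ, 1 ≤ q →
      C / (q : ℝ) ^ ((2:ℝ) + ε) ≤ |α - (p : ℝ) / (q : ℝ)|) :
    Filter.Tendsto
      (fun r : ℝ =>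
        Real.log ((sInf {n : ℕ | 1 ≤ n ∧
          |(n : ℝ) * α - (round ((n : ℝ) * α) : ℝ)| < r} : ℕ) : ℝ) / Real.log (1 / r))
      (nhdsWithin 0 (Set.Ioi 0)) (nhds 1) := by
  rw [Metric.tendsto_nhds]
  intro δ hδ
  obtain ⟨C, hCpos, hRoth⟩ := hroth (δ/3) (by positivity)
  set M : ℝ := 1 + Real.log 2 / δ + 3 * |Real.log C| / δ with hM
  have hMpos : 0 < M := by
    have h2 : (0:ℝ) < Real.log 2 := Real.log_pos (by norm_num)
    have : (0:ℝ) ≤ |Real.log C| := abs_nonneg _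
    positivity
  filter_upwards [Ioo_mem_nhdsGT_of_mem
    (show (0:ℝ) ∈ Set.Ico 0 (Real.exp (-M)) from ⟨le_refl _, Real.exp_pos _⟩)] with r hr
  obtain ⟨hr0, hrM⟩ := hr
  have hr1 : r < 1 := hrM.trans_le (by
    rw [show (1:ℝ) = Real.exp 0 by simp]
    exact (Real.exp_lt_exp.mpr (by linarith)).le)
  -- L = log (1/r) > M
  set L : ℝ := Real.log (1/r) with hLdef
  have hLeq : L = -Real.log r := by rw [hLdef, one_div, Real.log_inv]
  have hLM : M < L := by
    have := Real.log_lt_log hr0 hrM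
    rw [Real.log_exp] at this
    rw [hLeq]; linarith
  have hLpos : 0 < L := lt_trans hMpos hLM
  -- bounds from M
  have habs : (0:ℝ) ≤ |Real.log C| := abs_nonneg _
  have hlog2pos : (0:ℝ) < Real.log 2 := Real.log_pos (by norm_num)
  have hMexp : δ * (M - 1) = Real.log 2 + 3 * |Real.log C| := by
    rw [hM]; field_simp; ring
  have hML : δ * M < δ * L := mul_lt_mul_of_pos_left hLM hδ
  have hlog2 : Real.log 2 < δ * L := by nlinarith
  have hlogC : 3 * |Real.log C| < δ * L := by nlinarith
  -- the return time
  obtain ⟨n₁, hn₁mem, hn₁le⟩ := aux_exists_small α hr0 hr1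
  set S := {n : ℕ | 1 ≤ n ∧ |(n : ℝ) * α - (round ((n : ℝ) * α) : ℝ)| < r} with hS
  have hne : S.Nonempty := ⟨n₁, hn₁mem⟩
  have hmem : sInf S ∈ S := Nat.sInf_mem hne
  set n₀ : ℕ := sInf S with hn₀
  obtain ⟨hn₀1, hn₀r⟩ := hmem
  have hn₀pos : (0:ℝ) < (n₀ : ℝ) := by exact_mod_cast hn₀1
  have hn₀ge1 : (1:ℝ) ≤ (n₀ : ℝ) := by exact_mod_cast hn₀1
  have hlogn_nonneg : 0 ≤ Real.log (n₀:ℝ) := Real.log_nonneg hn₀ge1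
  -- upper bound: n₀ ≤ 2/r
  have hupper : (n₀ : ℝ) ≤ 2 / r := le_trans (by exact_mod_cast Nat.sInf_le hn₁mem) hn₁le
  have hlog_upper : Real.log (n₀:ℝ) ≤ Real.log 2 + L := by
    calc Real.log (n₀:ℝ) ≤ Real.log (2/r) := Real.log_le_log hn₀pos hupper
      _ = Real.log 2 - Real.log r := Real.log_div (by norm_num) (ne_of_gt hr0)
      _ = Real.log 2 + L := by rw [hLeq]; ring
  -- lower bound via Roth
  set p : ℤ := round ((n₀:ℝ) * α) with hp
  have hD := hRoth p (n₀ : ℤ) (by exact_mod_cast hn₀1)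
  have hcast : ((n₀ : ℤ) : ℝ) = (n₀ : ℝ) := by push_cast; ring
  rw [hcast] at hD
  have hfrac : α - (p:ℝ)/(n₀:ℝ) = ((n₀:ℝ) * α - (p:ℝ)) / (n₀:ℝ) := by
    field_simp
  rw [hfrac, abs_div, abs_of_pos hn₀pos] at hD
  have h2 : C / (n₀:ℝ) ^ ((2:ℝ) + δ/3) < r / (n₀:ℝ) :=
    lt_of_le_of_lt hD ((div_lt_div_iff_of_pos_right hn₀pos).mpr hn₀r)
  have hrpow_pos : (0:ℝ) < (n₀:ℝ) ^ ((1:ℝ) + δ/3) := Real.rpow_pos_of_pos hn₀pos _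
  have hC2 : C < r * (n₀:ℝ) ^ ((1:ℝ) + δ/3) := by
    rw [div_lt_div_iff₀ (Real.rpow_pos_of_pos hn₀pos _) hn₀pos] at h2
    have hsplit : (n₀:ℝ) ^ ((2:ℝ) + δ/3) = (n₀:ℝ) ^ ((1:ℝ) + δ/3) * (n₀:ℝ) := by
      rw [show (2:ℝ) + δ/3 = (1 + δ/3) + 1 by ring, Real.rpow_add hn₀pos, Real.rpow_one]
    rw [hsplit] at h2
    have := lt_of_mul_lt_mul_right (by linarith [h2] : C * (n₀:ℝ) <
      (r * (n₀:ℝ) ^ ((1:ℝ) + δ/3)) * (n₀:ℝ)) hn₀pos.le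
    exact this
  have hlog_lower : Real.log C < -L + (1 + δ/3) * Real.log (n₀:ℝ) := by
    calc Real.log C < Real.log (r * (n₀:ℝ) ^ ((1:ℝ) + δ/3)) := Real.log_lt_log hCpos hC2
      _ = Real.log r + (1 + δ/3) * Real.log (n₀:ℝ) := by
          rw [Real.log_mul (ne_of_gt hr0) (ne_of_gt hrpow_pos), Real.log_rpow hn₀pos]
      _ = -L + (1 + δ/3) * Real.log (n₀:ℝ) := by rw [hLeq]; ring
  have hlogC_lb : -(δ * L / 3) < Real.log C := by
    have := neg_abs_le (Real.log C); linarith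
  -- conclude
  have final : |Real.log (n₀:ℝ) / L - 1| < δ := by
    rw [abs_sub_lt_iff]
    constructor
    · rw [sub_lt_iff_lt_add, div_lt_iff₀ hLpos]
      linarith only [hlog_upper, hlog2, hLpos]
    · rw [sub_lt_comm, lt_div_iff₀ hLpos]
      nlinarith only [hlog_lower, hlogC_lb, hlogn_nonneg, hδ, hLpos,
        mul_pos hδ hLpos, mul_nonneg hδ.le hlogn_nonneg]
  exact lt_of_eq_of_lt (Real.dist_eq _ _) final
end
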